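/- arXiv:math/0510154 — 9 statements merged into one kernel-verified Lean document; each statement's English description precedes it below -/
import Mathlib

section
/- Let E = F(√a₁, √a₂) be a biquadratic extension of F with Galois group G = Gal(E/F) ≅ Z/2Z × Z/2Z generated by σ₁, σ₂ with σᵢ(√aᵢ) = √aᵢ and σᵢ(√aⱼ) = −√aⱼ for i ≠ j. Then elements α₁, α₂ ∈ E^× satisfy (1) N_{E/E₁}(α₁) = 1 = N_{E/E₂}(α₂) and (2) α₁·σ₁(α₂) = α₂·σ₂(α₁) if and only if (3) there exists β ∈ E^× such that αᵢ = β/σᵢ(β) for i = 1, 2. -/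
/-- **Hilbert 90 for biquadratic extensions.** Let `E = F(√a₁, √a₂)` with
`Gal(E/F) ≅ Z/2 × Z/2` generated by `σ₁, σ₂`, where `σᵢ(√aᵢ) = √aᵢ` and
`σᵢ(√aⱼ) = -√aⱼ` for `i ≠ j`.  Then `α₁, α₂ ∈ E^×` satisfy
(1) `N_{E/E₁}(α₁) = 1 = N_{E/E₂}(α₂)` and (2) `α₁·σ₁(α₂) = α₂·σ₂(α₁)`
iff (3) there exists `β ∈ E^×` with `αᵢ = β / σᵢ(β)` for `i = 1, 2`. -/
theorem biquadratic_hilbert90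
    (F E : Type*) [Field F] [Field E] [Algebra F E]
    (hchar : (2 : F) ≠ 0)
    (a₁ a₂ : F) (ha₁ : ¬ IsSquare a₁) (ha₂ : ¬ IsSquare a₂)
    (ha₁₂ : ¬ IsSquare (a₁ * a₂))
    (s₁ s₂ : E)
    (hs₁ : s₁ ^ 2 = algebraMap F E a₁) (hs₂ : s₂ ^ 2 = algebraMap F E a₂)
    (htop : Algebra.adjoin F ({s₁, s₂} : Set E) = ⊤)
    (σ₁ σ₂ : E ≃ₐ[F] E)
    (hσ₁₁ : σ₁ s₁ = s₁) (hσ₁₂ : σ₁ s₂ = -s₂)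
    (hσ₂₁ : σ₂ s₁ = -s₁) (hσ₂₂ : σ₂ s₂ = s₂)
    (α₁ α₂ : E) (hα₁ : α₁ ≠ 0) (hα₂ : α₂ ≠ 0) :
    (α₁ * σ₁ α₁ = 1 ∧ α₂ * σ₂ α₂ = 1 ∧ α₁ * σ₁ α₂ = α₂ * σ₂ α₁) ↔
      (∃ β : E, β ≠ 0 ∧ α₁ = β / σ₁ β ∧ α₂ = β / σ₂ β) := by
  have hinj : Function.Injective (algebraMap F E) := (algebraMap F E).injective
  have h2E : (2 : E) ≠ 0 := by
    have : (algebraMap F E) 2 = (2 : E) := map_ofNat _ 2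
    rw [← this]
    exact fun h => hchar (hinj (by simpa using h))
  have hs10 : s₁ ≠ 0 := by
    intro h
    apply ha₁
    have : algebraMap F E a₁ = algebraMap F E 0 := by rw [map_zero, ← hs₁, h]; ring
    exact ⟨0, by rw [hinj this]; ring⟩
  have hs20 : s₂ ≠ 0 := by
    intro h
    apply ha₂
    have : algebraMap F E a₂ = algebraMap F E 0 := by rw [map_zero, ← hs₂, h]; ring
    exact ⟨0, by rw [hinj this]; ring⟩
  have hne1 : s₁ ≠ -s₁ := fun h => hs10 (by
    have : (2 : E) * s₁ = 0 := by linear_combination h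
    rcases mul_eq_zero.mp this with h' | h'
    · exact absurd h' h2E
    · exact h')
  have hne2 : s₂ ≠ -s₂ := fun h => hs20 (by
    have : (2 : E) * s₂ = 0 := by linear_combination h
    rcases mul_eq_zero.mp this with h' | h'
    · exact absurd h' h2E
    · exact h')
  -- equality of algebra equivs agreeing on the generators
  have key : ∀ g h : E ≃ₐ[F] E, g s₁ = h s₁ → g s₂ = h s₂ → ∀ x, g x = h x := by
    intro g h h1 h2 x
    have hx : x ∈ Algebra.adjoin F ({s₁, s₂} : Set E) := by rw [htop]; exact Algebra.mem_top
    induction hx using Algebra.adjoin_induction with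
    | mem y hy => rcases hy with rfl | rfl <;> assumption
    | algebraMap r => simp
    | add a b _ _ ha hb => simp [map_add, ha, hb]
    | mul a b _ _ ha hb => simp [map_mul, ha, hb]
  have h11 : ∀ x, σ₁ (σ₁ x) = x := by
    have := key (σ₁.trans σ₁) (AlgEquiv.refl)
      (by simp [hσ₁₁]) (by simp [hσ₁₂])
    intro x; simpa using this x
  have h22 : ∀ x, σ₂ (σ₂ x) = x := by
    have := key (σ₂.trans σ₂) (AlgEquiv.refl)
      (by simp [hσ₂₁, hσ₂₂]) (by simp [hσ₂₂])
    intro x; simpa using this x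
  have hcomm : ∀ x, σ₁ (σ₂ x) = σ₂ (σ₁ x) := by
    have := key (σ₂.trans σ₁) (σ₁.trans σ₂)
      (by simp [hσ₁₁, hσ₂₁]) (by simp [hσ₁₂, hσ₂₂])
    intro x; simpa using this x
  constructor
  · rintro ⟨h1, h2, h3⟩
    set γ : E := α₁ * σ₁ α₂ with hγ
    -- find θ with nonzero "Poincaré series"
    have hθ : ∃ θ : E, θ + α₁ * σ₁ θ + α₂ * σ₂ θ + γ * σ₁ (σ₂ θ) ≠ 0 := by
      by_contra hc
      push_neg at hc
      let f₀ : E →* E := MonoidHom.id E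
      let f₁ : E →* E := MonoidHomClass.toMonoidHom σ₁
      let f₂ : E →* E := MonoidHomClass.toMonoidHom σ₂
      let f₃ : E →* E := MonoidHomClass.toMonoidHom (σ₂.trans σ₁)
      have hf₀ : ∀ x, f₀ x = x := fun _ => rfl
      have hf₁ : ∀ x, f₁ x = σ₁ x := fun _ => rfl
      have hf₂ : ∀ x, f₂ x = σ₂ x := fun _ => rfl
      have hf₃ : ∀ x, f₃ x = σ₁ (σ₂ x) := fun _ => rfl
      have d01 : f₀ ≠ f₁ := fun h => hne2 (by
        have := DFunLike.congr_fun h s₂; rw [hf₀, hf₁, hσ₁₂] at this; exact this)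
      have d02 : f₀ ≠ f₂ := fun h => hne1 (by
        have := DFunLike.congr_fun h s₁; rw [hf₀, hf₂, hσ₂₁] at this; exact this)
      have d03 : f₀ ≠ f₃ := fun h => hne1 (by
        have := DFunLike.congr_fun h s₁; rw [hf₀, hf₃, hσ₂₁, map_neg, hσ₁₁] at this; exact this)
      have d12 : f₁ ≠ f₂ := fun h => hne1 (by
        have := DFunLike.congr_fun h s₁; rw [hf₁, hf₂, hσ₁₁, hσ₂₁] at this; exact this)
      have d13 : f₁ ≠ f₃ := fun h => hne1 (by
        have := DFunLike.congr_fun h s₁; rw [hf₁, hf₃, hσ₁₁, hσ₂₁, map_neg, hσ₁₁] at this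
        exact this)
      have d23 : f₂ ≠ f₃ := fun h => hne2 (by
        have := DFunLike.congr_fun h s₂; rw [hf₂, hf₃, hσ₂₂, hσ₁₂] at this
        exact this)
      let v : Fin 4 → (E →* E) := ![f₀, f₁, f₂, f₃]
      have hv0 : v 0 = f₀ := rfl
      have hv1 : v 1 = f₁ := rfl
      have hv2 : v 2 = f₂ := rfl
      have hv3 : v 3 = f₃ := rfl
      have hvinj : Function.Injective v := by
        intro i j hij
        fin_cases i <;> fin_cases j <;>
          first
            | rfl
            | (exact absurd hij (by first
                | exact d01 | exact d02 | exact d03 | exact d12 | exact d13 | exact d23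
                | exact d01.symm | exact d02.symm | exact d03.symm
                | exact d12.symm | exact d13.symm | exact d23.symm))
      have li : LinearIndependent E (fun i => ((v i : E →* E) : E → E)) :=
        (linearIndependent_monoidHom E E).comp v hvinj
      let c : Fin 4 → E := ![1, α₁, α₂, γ]
      have hsum : ∑ i, c i • ((v i : E →* E) : E → E) = 0 := by
        funext θ
        have h4 : (∑ i, c i • ((v i : E →* E) : E → E)) θ
            = θ + α₁ * σ₁ θ + α₂ * σ₂ θ + γ * σ₁ (σ₂ θ) := by
          rw [Fin.sum_univ_four]
          show c 0 * f₀ θ + c 1 * f₁ θ + c 2 * f₂ θ + c 3 * f₃ θ = _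
          rw [hf₀, hf₁, hf₂, hf₃]
          show 1 * θ + α₁ * σ₁ θ + α₂ * σ₂ θ + γ * σ₁ (σ₂ θ) = _
          ring
        rw [h4, hc θ]; rfl
      have hz := Fintype.linearIndependent_iff.mp li c hsum 0
      have : (1 : E) = 0 := hz
      exact one_ne_zero this
    obtain ⟨θ, hθ⟩ := hθ
    set β : E := θ + α₁ * σ₁ θ + α₂ * σ₂ θ + γ * σ₁ (σ₂ θ) with hβdef
    have h2' : σ₁ α₂ * σ₁ (σ₂ α₂) = 1 := by
      rw [← map_mul, h2, map_one]
    have e1 : α₁ * σ₁ β = β := by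
      simp only [hβdef, hγ, map_add, map_mul, h11]
      linear_combination (θ + α₂ * σ₂ θ) * h1
    have e2 : α₂ * σ₂ β = β := by
      have hrw : σ₂ (σ₁ θ) = σ₁ (σ₂ θ) := (hcomm θ).symm
      have hrw2 : σ₂ (σ₁ (σ₂ θ)) = σ₁ θ := by rw [← hcomm, h22]
      have hrw3 : σ₂ (σ₁ α₂) = σ₁ (σ₂ α₂) := (hcomm α₂).symm
      simp only [hβdef, hγ, map_add, map_mul, h22, hrw, hrw2, hrw3]
      linear_combination θ * h2 - σ₁ (σ₂ θ) * h3 - σ₁ (σ₂ α₂) * σ₁ θ * h3 + α₁ * σ₁ θ * h2'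
    refine ⟨β, hθ, ?_, ?_⟩
    · have hσβ : σ₁ β ≠ 0 := fun h => hθ (by rw [← e1, h, mul_zero])
      rw [eq_div_iff hσβ]; exact e1
    · have hσβ : σ₂ β ≠ 0 := fun h => hθ (by rw [← e2, h, mul_zero])
      rw [eq_div_iff hσβ]; exact e2
  · rintro ⟨β, hβ, h1, h2⟩
    have hσ₁β : σ₁ β ≠ 0 := fun h => hβ (by simpa [h] using (map_eq_zero σ₁).mp h)
    have hσ₂β : σ₂ β ≠ 0 := fun h => hβ (by simpa [h] using (map_eq_zero σ₂).mp h)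
    subst h1 h2
    refine ⟨?_, ?_, ?_⟩
    · rw [map_div₀, h11]
      field_simp
    · rw [map_div₀, h22]
      field_simp
    · rw [map_div₀, map_div₀, hcomm]
      field_simp
end

section
/- Let E = F(√a₁, √a₂) be a biquadratic extension of F with Galois group G generated by σ₁, σ₂ as above. Given α₁, α₂ ∈ E^× such that N_{E/E₁}(α₁) = 1 = N_{E/E₂}(α₂) and α₁·σ₁(α₂) = α₂·σ₂(α₁), there exists a unique crossed homomorphism f : G → E^× with f(σ₁) = α₁ and f(σ₂) = α₂. -/
/-- A *crossed homomorphism* from the Galois group of `E/F` to `E^×`: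
a map `f : Gal(E/F) → E` with nonzero values satisfying
`f (γ₁γ₂) = γ₁(f γ₂) · f γ₁`. -/
def IsCrossedHom {F E : Type*} [Field F] [Field E] [Algebra F E]
    (f : (E ≃ₐ[F] E) → E) : Prop :=
  (∀ g, f g ≠ 0) ∧ ∀ γ₁ γ₂ : E ≃ₐ[F] E, f (γ₁ * γ₂) = γ₁ (f γ₂) * f γ₁

/-- For a biquadratic extension `E = F(√a₁, √a₂)` with Galois group generated
by `σ₁, σ₂`, if `α₁, α₂ ∈ E^×` satisfy `N_{E/E₁}(α₁) = 1 = N_{E/E₂}(α₂)` and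
`α₁·σ₁(α₂) = α₂·σ₂(α₁)`, then there is a unique crossed homomorphism
`f : G → E^×` with `f σ₁ = α₁` and `f σ₂ = α₂`. -/
theorem biquadratic_unique_crossedHom
    (F E : Type*) [Field F] [Field E] [Algebra F E]
    (hchar : (2 : F) ≠ 0)
    (a₁ a₂ : F) (ha₁ : ¬ IsSquare a₁) (ha₂ : ¬ IsSquare a₂)
    (ha₁₂ : ¬ IsSquare (a₁ * a₂))
    (s₁ s₂ : E)
    (hs₁ : s₁ ^ 2 = algebraMap F E a₁) (hs₂ : s₂ ^ 2 = algebraMap F E a₂)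
    (htop : Algebra.adjoin F ({s₁, s₂} : Set E) = ⊤)
    (σ₁ σ₂ : E ≃ₐ[F] E)
    (hσ₁₁ : σ₁ s₁ = s₁) (hσ₁₂ : σ₁ s₂ = -s₂)
    (hσ₂₁ : σ₂ s₁ = -s₁) (hσ₂₂ : σ₂ s₂ = s₂)
    (α₁ α₂ : E) (hα₁ : α₁ ≠ 0) (hα₂ : α₂ ≠ 0)
    (hn₁ : α₁ * σ₁ α₁ = 1) (hn₂ : α₂ * σ₂ α₂ = 1)
    (hcomp : α₁ * σ₁ α₂ = α₂ * σ₂ α₁) :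
    ∃! f : (E ≃ₐ[F] E) → E, IsCrossedHom f ∧ f σ₁ = α₁ ∧ f σ₂ = α₂ := by
  -- basic nonvanishing facts
  have h2E : (2 : E) ≠ 0 := by
    intro h
    apply hchar
    have := (algebraMap F E).injective
    apply this
    rw [map_ofNat, map_zero]
    exact_mod_cast h
  have hs10 : s₁ ≠ 0 := by
    intro h
    apply ha₁
    have : algebraMap F E a₁ = 0 := by rw [← hs₁, h]; ring
    have ha0 : a₁ = 0 := (algebraMap F E).injective (by rw [this, map_zero])
    exact ⟨0, by rw [ha0]; ring⟩
  have hs20 : s₂ ≠ 0 := by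
    intro h
    apply ha₂
    have : algebraMap F E a₂ = 0 := by rw [← hs₂, h]; ring
    have ha0 : a₂ = 0 := (algebraMap F E).injective (by rw [this, map_zero])
    exact ⟨0, by rw [ha0]; ring⟩
  have hne1 : -s₁ ≠ s₁ := by
    intro h
    have : (2 : E) * s₁ = 0 := by linear_combination -h
    rcases mul_eq_zero.mp this with h' | h'
    exact h2E h'
    exact hs10 h'
  have hne2 : -s₂ ≠ s₂ := by
    intro h
    have : (2 : E) * s₂ = 0 := by linear_combination -h
    rcases mul_eq_zero.mp this with h' | h'
    exact h2E h'
    exact hs20 h'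
  -- extensionality from generators
  have hext : ∀ g g' : E ≃ₐ[F] E, g s₁ = g' s₁ → g s₂ = g' s₂ → g = g' := by
    intro g g' h1 h2
    ext x
    have hx : x ∈ Algebra.adjoin F ({s₁, s₂} : Set E) := by
      rw [htop]; exact trivial
    induction hx using Algebra.adjoin_induction with
    | mem y hy =>
      rcases hy with rfl | hy
      · exact h1
      · rw [Set.mem_singleton_iff] at hy; subst hy; exact h2
    | algebraMap r => rw [AlgEquiv.commutes, AlgEquiv.commutes]
    | add x y hx hy ihx ihy => rw [map_add, map_add, ihx, ihy]
    | mul x y hx hy ihx ihy => rw [map_mul, map_mul, ihx, ihy]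
  -- group relations
  have hsq1 : σ₁ * σ₁ = 1 := by
    apply hext <;> simp [AlgEquiv.mul_apply, hσ₁₁, hσ₁₂]
  have hsq2 : σ₂ * σ₂ = 1 := by
    apply hext <;> simp [AlgEquiv.mul_apply, hσ₂₁, hσ₂₂]
  have hcomm : σ₂ * σ₁ = σ₁ * σ₂ := by
    apply hext <;> simp [AlgEquiv.mul_apply, hσ₁₁, hσ₁₂, hσ₂₁, hσ₂₂]
  have hinv1 : ∀ x : E, σ₁ (σ₁ x) = x := fun x => by
    have := congrArg (fun g : E ≃ₐ[F] E => g x) hsq1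
    simpa [AlgEquiv.mul_apply] using this
  have hinv2 : ∀ x : E, σ₂ (σ₂ x) = x := fun x => by
    have := congrArg (fun g : E ≃ₐ[F] E => g x) hsq2
    simpa [AlgEquiv.mul_apply] using this
  have hswap : ∀ x : E, σ₂ (σ₁ x) = σ₁ (σ₂ x) := fun x => by
    have := congrArg (fun g : E ≃ₐ[F] E => g x) hcomm
    simpa [AlgEquiv.mul_apply] using this
  -- classification of the Galois group
  have hclass : ∀ g : E ≃ₐ[F] E, g = 1 ∨ g = σ₁ ∨ g = σ₂ ∨ g = σ₁ * σ₂ := by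
    intro g
    have hg1 : g s₁ = s₁ ∨ g s₁ = -s₁ := by
      have hsq : g s₁ ^ 2 = s₁ ^ 2 := by
        rw [← map_pow, hs₁, AlgEquiv.commutes]
      have : (g s₁ - s₁) * (g s₁ + s₁) = 0 := by linear_combination hsq
      rcases mul_eq_zero.mp this with h | h
      · left; linear_combination h
      · right; linear_combination h
    have hg2 : g s₂ = s₂ ∨ g s₂ = -s₂ := by
      have hsq : g s₂ ^ 2 = s₂ ^ 2 := by
        rw [← map_pow, hs₂, AlgEquiv.commutes]
      have : (g s₂ - s₂) * (g s₂ + s₂) = 0 := by linear_combination hsq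
      rcases mul_eq_zero.mp this with h | h
      · left; linear_combination h
      · right; linear_combination h
    rcases hg1 with h1 | h1 <;> rcases hg2 with h2 | h2
    · exact Or.inl (hext _ _ (by simpa using h1) (by simpa using h2))
    · exact Or.inr (Or.inl (hext _ _ (by rw [h1, hσ₁₁]) (by rw [h2, hσ₁₂])))
    · exact Or.inr (Or.inr (Or.inl (hext _ _ (by rw [h1, hσ₂₁]) (by rw [h2, hσ₂₂]))))
    · refine Or.inr (Or.inr (Or.inr (hext _ _ ?_ ?_)))
      · rw [h1, AlgEquiv.mul_apply, hσ₂₁, map_neg, hσ₁₁]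
      · rw [h2, AlgEquiv.mul_apply, hσ₂₂, hσ₁₂]
  -- distinctness
  have d1 : σ₁ ≠ 1 := by
    intro h; apply hne2; rw [← hσ₁₂, h, AlgEquiv.one_apply]
  have d2 : σ₂ ≠ 1 := by
    intro h; apply hne1; rw [← hσ₂₁, h, AlgEquiv.one_apply]
  have d3 : σ₂ ≠ σ₁ := by
    intro h; apply hne1; rw [← hσ₂₁, h, hσ₁₁]
  have ht1 : (σ₁ * σ₂) s₁ = -s₁ := by rw [AlgEquiv.mul_apply, hσ₂₁, map_neg, hσ₁₁]
  have ht2 : (σ₁ * σ₂) s₂ = -s₂ := by rw [AlgEquiv.mul_apply, hσ₂₂, hσ₁₂]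
  have d4 : σ₁ * σ₂ ≠ 1 := by
    intro h; apply hne1; rw [← ht1, h, AlgEquiv.one_apply]
  have d5 : σ₁ * σ₂ ≠ σ₁ := by
    intro h; apply hne1; rw [← ht1, h, hσ₁₁]
  have d6 : σ₁ * σ₂ ≠ σ₂ := by
    intro h; apply hne2; rw [← ht2, h, hσ₂₂]
  -- more group relations
  have r1 : σ₁ * (σ₁ * σ₂) = σ₂ := by rw [← mul_assoc, hsq1, one_mul]
  have r2 : σ₂ * (σ₁ * σ₂) = σ₁ := by
    rw [← mul_assoc, hcomm, mul_assoc, hsq2, mul_one]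
  have r3 : (σ₁ * σ₂) * σ₁ = σ₂ := by
    rw [mul_assoc, hcomm, ← mul_assoc, hsq1, one_mul]
  have r4 : (σ₁ * σ₂) * σ₂ = σ₁ := by rw [mul_assoc, hsq2, mul_one]
  have r5 : (σ₁ * σ₂) * (σ₁ * σ₂) = 1 := by
    rw [mul_assoc, ← mul_assoc σ₂, hcomm, mul_assoc, hsq2, mul_one, hsq1]
  -- consequences of hcomp / norms
  have hc1 : σ₁ α₁ * α₂ = σ₁ α₂ * σ₁ (σ₂ α₁) := by
    have := congrArg σ₁ hcomp
    rw [map_mul, map_mul, hinv1] at this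
    linear_combination this
  have hc2 : σ₂ α₁ * σ₂ (σ₁ α₂) = σ₂ α₂ * α₁ := by
    have := congrArg σ₂ hcomp
    rw [map_mul, map_mul, hinv2] at this
    linear_combination this
  have hn₂' : σ₁ α₂ * σ₁ (σ₂ α₂) = 1 := by
    have := congrArg σ₁ hn₂
    rw [map_mul, map_one] at this
    exact this
  have hσα₂ : σ₁ α₂ ≠ 0 := by
    intro h
    apply hα₂
    have := congrArg σ₁.symm h
    rwa [AlgEquiv.symm_apply_apply, map_zero] at this
  classical
  set f : (E ≃ₐ[F] E) → E := fun g =>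
    if g = σ₁ then α₁ else if g = σ₂ then α₂ else
      if g = σ₁ * σ₂ then σ₁ α₂ * α₁ else 1 with hf
  have f1 : f 1 = 1 := by
    simp only [hf, if_neg (Ne.symm d1), if_neg (Ne.symm d2), if_neg (Ne.symm d4)]
  have fσ₁ : f σ₁ = α₁ := by simp [hf]
  have fσ₂ : f σ₂ = α₂ := by simp [hf, d3]
  have fτ : f (σ₁ * σ₂) = σ₁ α₂ * α₁ := by simp [hf, d5, d6]
  refine ⟨f, ⟨⟨?_, ?_⟩, fσ₁, fσ₂⟩, ?_⟩
  · -- nonvanishing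
    intro g
    rcases hclass g with rfl | rfl | rfl | rfl
    · rw [f1]; exact one_ne_zero
    · rw [fσ₁]; exact hα₁
    · rw [fσ₂]; exact hα₂
    · rw [fτ]; exact mul_ne_zero hσα₂ hα₁
  · -- cocycle
    intro γ₁ γ₂
    rcases hclass γ₁ with rfl | rfl | rfl | rfl <;>
      rcases hclass γ₂ with rfl | rfl | rfl | rfl
    · rw [one_mul, f1, AlgEquiv.one_apply, mul_one]
    · rw [one_mul, f1, AlgEquiv.one_apply, mul_one]
    · rw [one_mul, f1, AlgEquiv.one_apply, mul_one]
    · rw [one_mul, f1, AlgEquiv.one_apply, mul_one]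
    · rw [mul_one, f1, map_one, one_mul]
    · rw [hsq1, f1, fσ₁]; linear_combination -hn₁
    · rw [fτ, fσ₂, fσ₁]
    · rw [r1, fσ₂, fτ, fσ₁, map_mul, hinv1]; linear_combination -α₂ * hn₁
    · rw [mul_one, f1, map_one, one_mul]
    · rw [hcomm, fτ, fσ₁, fσ₂]; linear_combination hcomp
    · rw [hsq2, f1, fσ₂]; linear_combination -hn₂
    · rw [r2, fσ₁, fτ, fσ₂, map_mul]
      linear_combination (-α₂) * hc2 - α₁ * hn₂
    · rw [mul_one, f1, map_one, one_mul]
    · rw [r3, fσ₂, fσ₁, fτ, AlgEquiv.mul_apply]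
      linear_combination α₁ * hc1 - α₂ * hn₁
    · rw [r4, fσ₁, fσ₂, fτ, AlgEquiv.mul_apply]
      linear_combination -α₁ * hn₂'
    · rw [r5, f1, fτ, map_mul, AlgEquiv.mul_apply, AlgEquiv.mul_apply, hswap, hinv1]
      linear_combination (σ₂ α₂ * α₁) * hc1 - (α₂ * σ₂ α₂) * hn₁ - hn₂
  · -- uniqueness
    rintro g ⟨⟨hg0, hgc⟩, hg1, hg2⟩
    have hg1' : g 1 = 1 := by
      have := hgc 1 1
      rw [one_mul, AlgEquiv.one_apply] at this
      exact (mul_left_cancel₀ (hg0 1) (by rw [mul_one]; exact this.symm))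
    funext x
    rcases hclass x with rfl | rfl | rfl | rfl
    · rw [hg1', f1]
    · rw [hg1, fσ₁]
    · rw [hg2, fσ₂]
    · rw [hgc σ₁ σ₂, hg1, hg2, fτ]
end

section
/- Let G = Z/2Z × Z/2Z with generators σ₁, σ₂, and let M be a multiplicatively written G-module such that (M, σ₁, σ₂) satisfies QH90. Then ker (1−σ₁)(1−σ₂) = ker(1−σ₁) · ker(1−σ₂) if and only if for all m₁, m₂ ∈ M, the two conditions (1+σ₁)·m₁ = 1 = (1+σ₂)·m₂ and m₁·σ₁(m₂) = m₂·σ₂(m₁) together imply that there exists n ∈ M with mᵢ = (1−σᵢ)·n for i = 1, 2. -/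
/-- **Theorem 3 (module-theoretic form).** Let `G = Z/2 × Z/2` act on a
multiplicative abelian group `M` via two commuting involutions `σ₁, σ₂`, and
suppose `(M, σ₁, σ₂)` satisfies QH90 (for each `i`, `(1+σᵢ)·m = 1` implies
`m = (1−σᵢ)·n` for some `n`).  Then
`ker (1−σ₁)(1−σ₂) = ker(1−σ₁) · ker(1−σ₂)`
iff for all `m₁, m₂ ∈ M` the conditions `(1+σ₁)·m₁ = 1 = (1+σ₂)·m₂` and
`m₁·σ₁(m₂) = m₂·σ₂(m₁)` imply the existence of `n ∈ M` with
`mᵢ = (1−σᵢ)·n` for `i = 1, 2`. -/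
theorem klein_module_hilbert90_equiv
    (M : Type*) [CommGroup M]
    (σ₁ σ₂ : M ≃* M)
    (hinv₁ : ∀ m, σ₁ (σ₁ m) = m) (hinv₂ : ∀ m, σ₂ (σ₂ m) = m)
    (hcomm : ∀ m, σ₁ (σ₂ m) = σ₂ (σ₁ m))
    (hQH90₁ : ∀ m : M, m * σ₁ m = 1 → ∃ n : M, m = n * (σ₁ n)⁻¹)
    (hQH90₂ : ∀ m : M, m * σ₂ m = 1 → ∃ n : M, m = n * (σ₂ n)⁻¹) :
    ({m : M | m * σ₁ (σ₂ m) = σ₁ m * σ₂ m} =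
        {m : M | ∃ k₁ k₂ : M, σ₁ k₁ = k₁ ∧ σ₂ k₂ = k₂ ∧ m = k₁ * k₂}) ↔
      (∀ m₁ m₂ : M, m₁ * σ₁ m₁ = 1 → m₂ * σ₂ m₂ = 1 →
        m₁ * σ₁ m₂ = m₂ * σ₂ m₁ →
        ∃ n : M, m₁ = n * (σ₁ n)⁻¹ ∧ m₂ = n * (σ₂ n)⁻¹) := by
  constructor
  · -- forward direction
    intro hset m₁ m₂ h1 h2 hc
    obtain ⟨a, ha⟩ := hQH90₁ m₁ h1
    obtain ⟨b, hb⟩ := hQH90₂ m₂ h2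
    subst ha hb
    -- derive the cross-multiplied form of hc
    have h' : a * σ₁ b * (σ₂ b * σ₁ (σ₂ a)) = b * σ₂ a * (σ₁ a * σ₁ (σ₂ b)) := by
      have hd : (a * σ₁ b) / (σ₁ a * σ₁ (σ₂ b)) = (b * σ₂ a) / (σ₂ b * σ₁ (σ₂ a)) := by
        calc (a * σ₁ b) / (σ₁ a * σ₁ (σ₂ b))
            = a * (σ₁ a)⁻¹ * σ₁ (b * (σ₂ b)⁻¹) := by
              simp only [map_mul, map_inv, div_eq_mul_inv, mul_inv]; simp [mul_comm, mul_left_comm, mul_assoc]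
          _ = b * (σ₂ b)⁻¹ * σ₂ (a * (σ₁ a)⁻¹) := hc
          _ = (b * σ₂ a) / (σ₂ b * σ₁ (σ₂ a)) := by
              simp only [map_mul, map_inv, div_eq_mul_inv, mul_inv, ← hcomm]; simp [mul_comm, mul_left_comm, mul_assoc]
      rw [div_eq_div_iff_mul_eq_mul] at hd
      exact hd
    have hmem : a⁻¹ * b ∈ {m : M | m * σ₁ (σ₂ m) = σ₁ m * σ₂ m} := by
      show a⁻¹ * b * σ₁ (σ₂ (a⁻¹ * b)) = σ₁ (a⁻¹ * b) * σ₂ (a⁻¹ * b)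
      calc a⁻¹ * b * σ₁ (σ₂ (a⁻¹ * b))
          = (b * σ₁ (σ₂ b)) / (a * σ₁ (σ₂ a)) := by
            simp only [map_mul, map_inv, div_eq_mul_inv, mul_inv]; simp [mul_comm, mul_left_comm, mul_assoc]
        _ = (σ₁ b * σ₂ b) / (σ₁ a * σ₂ a) := by
            rw [div_eq_div_iff_mul_eq_mul]
            calc b * σ₁ (σ₂ b) * (σ₁ a * σ₂ a)
                = b * σ₂ a * (σ₁ a * σ₁ (σ₂ b)) := by ac_rfl
              _ = a * σ₁ b * (σ₂ b * σ₁ (σ₂ a)) := h'.symm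
              _ = σ₁ b * σ₂ b * (a * σ₁ (σ₂ a)) := by ac_rfl
        _ = σ₁ (a⁻¹ * b) * σ₂ (a⁻¹ * b) := by
            simp only [map_mul, map_inv, div_eq_mul_inv, mul_inv]; simp [mul_comm, mul_left_comm, mul_assoc]
    rw [hset] at hmem
    obtain ⟨k₁, k₂, hk₁, hk₂, hab⟩ := hmem
    have hb' : a * (k₁ * k₂) = b := by rw [← hab, mul_inv_cancel_left]
    have hn : a * k₁ = b * k₂⁻¹ := by
      rw [← hb']
      calc a * k₁ = a * k₁ * (k₂ * k₂⁻¹) := by rw [mul_inv_cancel, mul_one]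
        _ = a * (k₁ * k₂) * k₂⁻¹ := by ac_rfl
    refine ⟨a * k₁, ?_, ?_⟩
    · have hσ₁n : σ₁ (a * k₁) = σ₁ a * k₁ := by rw [map_mul, hk₁]
      rw [hσ₁n, mul_inv]
      calc a * (σ₁ a)⁻¹ = a * (σ₁ a)⁻¹ * (k₁ * k₁⁻¹) := by rw [mul_inv_cancel, mul_one]
        _ = a * k₁ * ((σ₁ a)⁻¹ * k₁⁻¹) := by ac_rfl
    · have hσ₂n : σ₂ (a * k₁) = σ₂ b * k₂⁻¹ := by rw [hn, map_mul, map_inv, hk₂]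
      rw [hσ₂n, hn, mul_inv, inv_inv]
      calc b * (σ₂ b)⁻¹ = b * (σ₂ b)⁻¹ * (k₂⁻¹ * k₂) := by rw [inv_mul_cancel, mul_one]
        _ = b * k₂⁻¹ * ((σ₂ b)⁻¹ * k₂) := by ac_rfl
  · -- backward direction
    intro hcond
    ext m
    simp only [Set.mem_setOf_eq]
    constructor
    · intro hm
      obtain ⟨n, hn1, hn2⟩ := hcond 1 (m * (σ₂ m)⁻¹) (by simp)
        (by
          simp only [map_mul, map_inv, hinv₂]
          calc m * (σ₂ m)⁻¹ * (σ₂ m * m⁻¹)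
              = (m * m⁻¹) * ((σ₂ m)⁻¹ * σ₂ m) := by ac_rfl
            _ = 1 := by simp)
        (by
          simp only [map_one, one_mul, mul_one, map_mul, map_inv]
          have hd : σ₁ m / σ₁ (σ₂ m) = m / σ₂ m := by
            rw [div_eq_div_iff_mul_eq_mul]
            exact hm.symm
          simpa [div_eq_mul_inv] using hd)
      have hfix1 : σ₁ n = n := (mul_inv_eq_one.mp hn1.symm).symm
      have hd : m / σ₂ m = n / σ₂ n := by simpa [div_eq_mul_inv] using hn2
      rw [div_eq_div_iff_mul_eq_mul] at hd
      refine ⟨n, n⁻¹ * m, hfix1, ?_, (mul_inv_cancel_left n m).symm⟩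
      rw [map_mul, map_inv]
      have h' : σ₂ m / σ₂ n = m / n := by
        rw [div_eq_div_iff_mul_eq_mul, mul_comm]
        exact hd.symm
      have h'' : σ₂ m * (σ₂ n)⁻¹ = m * n⁻¹ := by simpa [div_eq_mul_inv] using h'
      calc (σ₂ n)⁻¹ * σ₂ m = σ₂ m * (σ₂ n)⁻¹ := mul_comm _ _
        _ = m * n⁻¹ := h''
        _ = n⁻¹ * m := mul_comm _ _
    · rintro ⟨k₁, k₂, hk₁, hk₂, rfl⟩
      have c₁ : σ₁ (σ₂ k₁) = σ₂ k₁ := by rw [hcomm, hk₁]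
      have c₂ : σ₁ (σ₂ k₂) = σ₁ k₂ := by rw [hk₂]
      simp only [map_mul, c₁, c₂, hk₁, hk₂]
      ac_rfl
end

section
/- Let E = F(√a₁, √a₂) be a biquadratic extension of F with Galois group G generated by σ₁, σ₂ as above. Then, in the G-module E^×, ker (1−σ₁)(1−σ₂) = ker(1−σ₁) · ker(1−σ₂); that is, {e ∈ E^× : e·σ₁σ₂(e) = σ₁(e)·σ₂(e)} equals the set of products e₁·e₂ where σ₁(e₁) = e₁ and σ₂(e₂) = e₂. -/
/-- **Corollary 1.** For a biquadratic extension `E = F(√a₁, √a₂)` with Galois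
group generated by `σ₁, σ₂`, in the `G`-module `E^×` one has
`ker (1−σ₁)(1−σ₂) = ker(1−σ₁) · ker(1−σ₂)`: for nonzero `e ∈ E`,
`e·σ₁σ₂(e) = σ₁(e)·σ₂(e)` iff `e = e₁·e₂` for some nonzero `e₁, e₂ ∈ E`
with `σ₁(e₁) = e₁` and `σ₂(e₂) = e₂`. -/
theorem biquadratic_kernel_product
    (F E : Type*) [Field F] [Field E] [Algebra F E]
    (hchar : (2 : F) ≠ 0)
    (a₁ a₂ : F) (ha₁ : ¬ IsSquare a₁) (ha₂ : ¬ IsSquare a₂)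
    (ha₁₂ : ¬ IsSquare (a₁ * a₂))
    (s₁ s₂ : E)
    (hs₁ : s₁ ^ 2 = algebraMap F E a₁) (hs₂ : s₂ ^ 2 = algebraMap F E a₂)
    (htop : Algebra.adjoin F ({s₁, s₂} : Set E) = ⊤)
    (σ₁ σ₂ : E ≃ₐ[F] E)
    (hσ₁₁ : σ₁ s₁ = s₁) (hσ₁₂ : σ₁ s₂ = -s₂)
    (hσ₂₁ : σ₂ s₁ = -s₁) (hσ₂₂ : σ₂ s₂ = s₂) :
    ∀ e : E, e ≠ 0 →
      (e * σ₁ (σ₂ e) = σ₁ e * σ₂ e ↔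
        ∃ e₁ e₂ : E, e₁ ≠ 0 ∧ e₂ ≠ 0 ∧ σ₁ e₁ = e₁ ∧ σ₂ e₂ = e₂ ∧
          e = e₁ * e₂) := by
  -- s₁ ≠ 0
  have ha₁0 : a₁ ≠ 0 := fun h => ha₁ (h ▸ ⟨0, by ring⟩)
  have hs₁0 : s₁ ≠ 0 := by
    intro h
    apply ha₁0
    have : algebraMap F E a₁ = 0 := by rw [← hs₁, h]; ring
    exact (map_eq_zero _).mp this
  -- extensionality on generators
  have hext : ∀ (f g : E ≃ₐ[F] E), f s₁ = g s₁ → f s₂ = g s₂ → ∀ x, f x = g x := by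
    intro f g h1 h2 x
    have := AlgHom.ext_of_adjoin_eq_top htop (φ₁ := f.toAlgHom) (φ₂ := g.toAlgHom)
      (by rintro y (rfl | rfl) <;> simpa)
    exact congrFun (congrArg (fun h => h.toFun) this) x
  have hsq2 : ∀ x, σ₂ (σ₂ x) = x := by
    intro x
    have := hext (σ₂.trans σ₂) (AlgEquiv.refl)
      (by simp [hσ₂₁]) (by simp [hσ₂₂]) x
    simpa using this
  have hcomm : ∀ x, σ₁ (σ₂ x) = σ₂ (σ₁ x) := by
    intro x
    exact hext (σ₂.trans σ₁) (σ₁.trans σ₂)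
      (by simp [hσ₂₁, hσ₁₁, map_neg]) (by simp [hσ₂₂, hσ₁₂, map_neg]) x
  intro e he
  constructor
  · intro h
    by_cases h0 : e + σ₂ e = 0
    · -- σ₂ e = -e
      have hσ₂e : σ₂ e = -e := by linear_combination h0
      refine ⟨s₁⁻¹, e * s₁, inv_ne_zero hs₁0, mul_ne_zero he hs₁0, ?_, ?_, ?_⟩
      · rw [map_inv₀, hσ₁₁]
      · rw [map_mul, hσ₂e, hσ₂₁]; ring
      · field_simp
    · refine ⟨e / (e + σ₂ e), e + σ₂ e, by
        exact div_ne_zero he h0, h0, ?_, ?_, by field_simp⟩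
      · have hd : σ₁ e + σ₁ (σ₂ e) ≠ 0 := by
          intro hz
          apply h0
          have : σ₁ (e + σ₂ e) = 0 := by rw [map_add]; exact hz
          exact (map_eq_zero_iff σ₁ σ₁.injective).mp this
        rw [map_div₀, map_add]
        rw [div_eq_div_iff hd h0]
        linear_combination -h
      · rw [map_add, hsq2]; ring
  · rintro ⟨e₁, e₂, he₁, he₂, hf₁, hf₂, rfl⟩
    have h1 : σ₁ (σ₂ e₁) = σ₂ e₁ := by rw [hcomm, hf₁]
    have h2 : σ₂ (σ₁ e₂) = σ₁ e₂ := by rw [← hcomm, hf₂]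
    simp only [map_mul, hf₁, hf₂, h1]
    ring
end

section
/- Let E = F(√a₁, √a₂) be a biquadratic extension of F with Galois group G generated by σ₁, σ₂ as above, with intermediate fields E₁ = F(√a₁), E₂ = F(√a₂), E₃ = F(√(a₁a₂)). Then {e ∈ E^× : N_{E/E₃}(e) ∈ F^×} = ⟨E₁^×, E₂^×⟩, the subgroup of E^× generated by E₁^× and E₂^×; that is, e·σ₁σ₂(e) ∈ F^× if and only if e is a product of nonzero elements of E₁ and E₂. -/
/-!
Let `τ = σ₁σ₂`; it negates `s₁` and `s₂` and fixes `s₁s₂`. If `x ∈ F(sᵢ)` then `τ` acts on `x`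
as the conjugation of `F(sᵢ)/F`, so `x · τx ∈ F`; since `x ↦ x · τx` is multiplicative, the whole
subgroup generated by `E₁^×` and `E₂^×` lands in `F^×`. Conversely, writing
`e = c₀ + c₁s₁ + c₂s₂ + c₃s₁s₂`, one finds
`e · τe = (c₀² - a₁c₁² - a₂c₂² + a₁a₂c₃²) + 2(c₀c₃ - c₁c₂) s₁s₂`,
and as `a₁a₂` is not a square this lies in `F` only if `c₀c₃ = c₁c₂`. That relation makes `e`
factor: `e = c₀⁻¹ (c₀ + c₁s₁)(c₀ + c₂s₂)` when `c₀ ≠ 0`, and `e = (c₂ + c₃s₁) s₂` or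
`e = s₁ (c₁ + c₃s₂)` when `c₀ = 0`.
-/

open Algebra

section CommRing

variable {F E : Type*} [CommRing F] [CommRing E] [Algebra F E]

theorem exists_eq_add_mul_of_mem_adjoin_singleton {a : F} {s : E}
    (hs : s ^ 2 = algebraMap F E a) {x : E} (hx : x ∈ adjoin F {s}) :
    ∃ c₀ c₁ : F, x = algebraMap F E c₀ + algebraMap F E c₁ * s := by
  induction hx using adjoin_induction with
  | mem y hy =>
    rcases hy with rfl
    exact ⟨0, 1, by simp⟩
  | algebraMap r => exact ⟨r, 0, by simp⟩
  | add x y _ _ ihx ihy =>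
    obtain ⟨c₀, c₁, rfl⟩ := ihx
    obtain ⟨d₀, d₁, rfl⟩ := ihy
    exact ⟨c₀ + d₀, c₁ + d₁, by simp only [map_add]; ring⟩
  | mul x y _ _ ihx ihy =>
    obtain ⟨c₀, c₁, rfl⟩ := ihx
    obtain ⟨d₀, d₁, rfl⟩ := ihy
    refine ⟨c₀ * d₀ + a * c₁ * d₁, c₀ * d₁ + c₁ * d₀, ?_⟩
    simp only [map_add, map_mul]
    linear_combination (algebraMap F E c₁ * algebraMap F E d₁) * hs

theorem exists_eq_biquadratic_of_mem_adjoin_pair {a₁ a₂ : F} {s₁ s₂ : E}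
    (hs₁ : s₁ ^ 2 = algebraMap F E a₁) (hs₂ : s₂ ^ 2 = algebraMap F E a₂) {x : E}
    (hx : x ∈ adjoin F {s₁, s₂}) :
    ∃ c₀ c₁ c₂ c₃ : F, x = algebraMap F E c₀ + algebraMap F E c₁ * s₁ +
      algebraMap F E c₂ * s₂ + algebraMap F E c₃ * (s₁ * s₂) := by
  induction hx using adjoin_induction with
  | mem y hy =>
    rcases hy with rfl | rfl
    · exact ⟨0, 1, 0, 0, by simp⟩
    · exact ⟨0, 0, 1, 0, by simp⟩
  | algebraMap r => exact ⟨r, 0, 0, 0, by simp⟩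
  | add x y _ _ ihx ihy =>
    obtain ⟨c₀, c₁, c₂, c₃, rfl⟩ := ihx
    obtain ⟨d₀, d₁, d₂, d₃, rfl⟩ := ihy
    exact ⟨c₀ + d₀, c₁ + d₁, c₂ + d₂, c₃ + d₃, by simp only [map_add]; ring⟩
  | mul x y _ _ ihx ihy =>
    obtain ⟨c₀, c₁, c₂, c₃, rfl⟩ := ihx
    obtain ⟨d₀, d₁, d₂, d₃, rfl⟩ := ihy
    refine ⟨c₀ * d₀ + a₁ * c₁ * d₁ + a₂ * c₂ * d₂ + a₁ * a₂ * c₃ * d₃,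
      c₀ * d₁ + c₁ * d₀ + a₂ * (c₂ * d₃ + c₃ * d₂),
      c₀ * d₂ + c₂ * d₀ + a₁ * (c₁ * d₃ + c₃ * d₁),
      c₀ * d₃ + c₃ * d₀ + c₁ * d₂ + c₂ * d₁, ?_⟩
    simp only [map_add, map_mul]
    linear_combination (algebraMap F E c₁ * algebraMap F E d₁ +
        (algebraMap F E c₁ * algebraMap F E d₃ + algebraMap F E c₃ * algebraMap F E d₁) * s₂ +
        algebraMap F E c₃ * algebraMap F E d₃ * s₂ ^ 2) * hs₁ +
      (algebraMap F E c₂ * algebraMap F E d₂ +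
        (algebraMap F E c₂ * algebraMap F E d₃ + algebraMap F E c₃ * algebraMap F E d₂) * s₁ +
        algebraMap F E c₃ * algebraMap F E d₃ * algebraMap F E a₁) * hs₂

variable {τ : E ≃ₐ[F] E}

theorem exists_algebraMap_eq_mul_apply_of_mem_adjoin {a : F} {s : E}
    (hs : s ^ 2 = algebraMap F E a) (hτ : τ s = -s) {x : E} (hx : x ∈ adjoin F {s}) :
    ∃ f : F, algebraMap F E f = x * τ x := by
  obtain ⟨c₀, c₁, rfl⟩ := exists_eq_add_mul_of_mem_adjoin_singleton hs hx
  refine ⟨c₀ ^ 2 - a * c₁ ^ 2, ?_⟩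
  simp only [map_add, map_mul, AlgEquiv.commutes, hτ, map_sub, map_pow]
  linear_combination (algebraMap F E c₁ ^ 2) * hs

theorem biquadratic_mul_apply {a₁ a₂ : F} {s₁ s₂ : E}
    (hs₁ : s₁ ^ 2 = algebraMap F E a₁) (hs₂ : s₂ ^ 2 = algebraMap F E a₂)
    (hτ₁ : τ s₁ = -s₁) (hτ₂ : τ s₂ = -s₂) (c₀ c₁ c₂ c₃ : F) :
    (algebraMap F E c₀ + algebraMap F E c₁ * s₁ + algebraMap F E c₂ * s₂ +
        algebraMap F E c₃ * (s₁ * s₂)) *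
      τ (algebraMap F E c₀ + algebraMap F E c₁ * s₁ + algebraMap F E c₂ * s₂ +
        algebraMap F E c₃ * (s₁ * s₂)) =
      algebraMap F E (c₀ ^ 2 - a₁ * c₁ ^ 2 - a₂ * c₂ ^ 2 + a₁ * a₂ * c₃ ^ 2) +
        algebraMap F E (2 * (c₀ * c₃ - c₁ * c₂)) * (s₁ * s₂) := by
  simp only [map_add, map_mul, map_sub, map_pow, map_ofNat, AlgEquiv.commutes, hτ₁, hτ₂]
  linear_combination (-algebraMap F E c₁ ^ 2 + algebraMap F E c₃ ^ 2 * s₂ ^ 2) * hs₁ +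
    (-algebraMap F E c₂ ^ 2 + algebraMap F E c₃ ^ 2 * algebraMap F E a₁) * hs₂

end CommRing

theorem exists_mem_adjoin_mul_eq_of_mul_eq_mul {F E : Type*} [Field F] [CommRing E]
    [Algebra F E] (s₁ s₂ : E) {c₀ c₁ c₂ c₃ : F} (h : c₀ * c₃ = c₁ * c₂) :
    ∃ x ∈ adjoin F {s₁}, ∃ y ∈ adjoin F {s₂}, algebraMap F E c₀ + algebraMap F E c₁ * s₁ +
      algebraMap F E c₂ * s₂ + algebraMap F E c₃ * (s₁ * s₂) = x * y := by
  have hs₁ : s₁ ∈ adjoin F {s₁} := self_mem_adjoin_singleton F s₁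
  have hs₂ : s₂ ∈ adjoin F {s₂} := self_mem_adjoin_singleton F s₂
  have linear_mem {s : E} (hs : s ∈ adjoin F {s}) (c c' : F) :
      algebraMap F E c + algebraMap F E c' * s ∈ adjoin F {s} :=
    add_mem (Subalgebra.algebraMap_mem _ c) (mul_mem (Subalgebra.algebraMap_mem _ c') hs)
  by_cases hc₀ : c₀ = 0
  · subst hc₀
    rcases mul_eq_zero.mp (h.symm.trans (zero_mul c₃)) with rfl | rfl
    · refine ⟨_, linear_mem hs₁ c₂ c₃, s₂, hs₂, ?_⟩
      simp only [map_zero]; ring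
    · refine ⟨s₁, hs₁, _, linear_mem hs₂ c₁ c₃, ?_⟩
      simp only [map_zero]; ring
  · refine ⟨algebraMap F E c₀⁻¹ * (algebraMap F E c₀ + algebraMap F E c₁ * s₁),
      mul_mem (Subalgebra.algebraMap_mem _ _) (linear_mem hs₁ c₀ c₁), _, linear_mem hs₂ c₀ c₂, ?_⟩
    have hc₃ : c₃ = c₀⁻¹ * (c₁ * c₂) := by rw [← h, inv_mul_cancel_left₀ hc₀]
    have hc₀' : algebraMap F E c₀⁻¹ * algebraMap F E c₀ = 1 := by
      rw [← map_mul, inv_mul_cancel₀ hc₀, map_one]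
    rw [hc₃]
    simp only [map_mul]
    linear_combination (-(algebraMap F E c₀) - algebraMap F E c₁ * s₁ - algebraMap F E c₂ * s₂) *
      hc₀'

theorem Subgroup.mem_closure_of_coe_eq_mul {M : Type*} [CommMonoid M] {S₁ S₂ : Set M}
    (u : Mˣ) {x y : M} (hx : x ∈ S₁) (hy : y ∈ S₂) (h : (u : M) = x * y) :
    u ∈ Subgroup.closure {v : Mˣ | (v : M) ∈ S₁ ∨ (v : M) ∈ S₂} := by
  have hxy : IsUnit (x * y) := h ▸ u.isUnit
  have hu : u = (isUnit_of_mul_isUnit_left hxy).unit * (isUnit_of_mul_isUnit_right hxy).unit :=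
    Units.ext h
  rw [hu]
  exact mul_mem (Subgroup.subset_closure (Or.inl hx)) (Subgroup.subset_closure (Or.inr hy))

section Field

variable {F E : Type*} [Field F] [Field E] [Algebra F E]

theorem eq_zero_of_algebraMap_add_mul_eq_zero {b : F} (hb : ¬IsSquare b) {t : E}
    (ht : t ^ 2 = algebraMap F E b) {x y : F}
    (h : algebraMap F E x + algebraMap F E y * t = 0) : y = 0 := by
  by_contra hy
  have ht' : t = algebraMap F E (-x / y) := by
    rw [map_div₀, map_neg, eq_div_iff ((map_ne_zero _).mpr hy)]
    linear_combination h
  exact hb ⟨-x / y, (algebraMap F E).injective (by rw [← ht, ht', map_mul, sq])⟩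

theorem mul_eq_mul_of_biquadratic_mul_apply_eq_algebraMap (hchar : (2 : F) ≠ 0)
    {a₁ a₂ : F} (ha₁₂ : ¬IsSquare (a₁ * a₂)) {s₁ s₂ : E}
    (hs₁ : s₁ ^ 2 = algebraMap F E a₁) (hs₂ : s₂ ^ 2 = algebraMap F E a₂)
    {τ : E ≃ₐ[F] E} (hτ₁ : τ s₁ = -s₁) (hτ₂ : τ s₂ = -s₂) {c₀ c₁ c₂ c₃ f : F}
    (h : algebraMap F E f =
      (algebraMap F E c₀ + algebraMap F E c₁ * s₁ + algebraMap F E c₂ * s₂ +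
          algebraMap F E c₃ * (s₁ * s₂)) *
        τ (algebraMap F E c₀ + algebraMap F E c₁ * s₁ + algebraMap F E c₂ * s₂ +
          algebraMap F E c₃ * (s₁ * s₂))) :
    c₀ * c₃ = c₁ * c₂ := by
  rw [biquadratic_mul_apply hs₁ hs₂ hτ₁ hτ₂] at h
  have ht : (s₁ * s₂) ^ 2 = algebraMap F E (a₁ * a₂) := by rw [mul_pow, hs₁, hs₂, map_mul]
  have h2 := eq_zero_of_algebraMap_add_mul_eq_zero ha₁₂ ht
    (x := c₀ ^ 2 - a₁ * c₁ ^ 2 - a₂ * c₂ ^ 2 + a₁ * a₂ * c₃ ^ 2 - f) (y := 2 * (c₀ * c₃ - c₁ * c₂))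
    (by rw [map_sub]; linear_combination -h)
  exact sub_eq_zero.mp ((mul_eq_zero.mp h2).resolve_left hchar)

variable (τ : E ≃ₐ[F] E)

def baseNormSubgroup : Subgroup Eˣ where
  carrier := {u | ∃ f : F, f ≠ 0 ∧ algebraMap F E f = u * τ u}
  one_mem' := ⟨1, one_ne_zero, by simp⟩
  mul_mem' := by
    rintro u v ⟨f, hf0, hf⟩ ⟨g, hg0, hg⟩
    refine ⟨f * g, mul_ne_zero hf0 hg0, ?_⟩
    rw [map_mul, hf, hg, Units.val_mul, map_mul]
    ring
  inv_mem' := by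
    rintro u ⟨f, hf0, hf⟩
    refine ⟨f⁻¹, inv_ne_zero hf0, ?_⟩
    rw [map_inv₀, hf, Units.val_inv_eq_inv_val, map_inv₀, mul_inv]

variable {τ}

theorem mem_baseNormSubgroup_of_mem_adjoin {a : F} {s : E} (hs : s ^ 2 = algebraMap F E a)
    (hτ : τ s = -s) {u : Eˣ} (hu : (u : E) ∈ adjoin F {s}) : u ∈ baseNormSubgroup τ := by
  obtain ⟨f, hf⟩ := exists_algebraMap_eq_mul_apply_of_mem_adjoin hs hτ hu
  refine ⟨f, fun hf0 => ?_, hf⟩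
  rw [hf0, map_zero, eq_comm, mul_eq_zero] at hf
  exact hf.elim u.ne_zero ((map_ne_zero τ).mpr u.ne_zero)

end Field

theorem biquadratic_norm_in_F_eq_subgroup_general
    (F E : Type*) [Field F] [Field E] [Algebra F E]
    (hchar : (2 : F) ≠ 0)
    (a₁ a₂ : F)
    (ha₁₂ : ¬ IsSquare (a₁ * a₂))
    (s₁ s₂ : E)
    (hs₁ : s₁ ^ 2 = algebraMap F E a₁) (hs₂ : s₂ ^ 2 = algebraMap F E a₂)
    (htop : Algebra.adjoin F ({s₁, s₂} : Set E) = ⊤)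
    (σ₁ σ₂ : E ≃ₐ[F] E)
    (hσ₁₁ : σ₁ s₁ = s₁) (hσ₁₂ : σ₁ s₂ = -s₂)
    (hσ₂₁ : σ₂ s₁ = -s₁) (hσ₂₂ : σ₂ s₂ = s₂) :
    ∀ e : Eˣ,
      ((∃ f : F, f ≠ 0 ∧ algebraMap F E f = (e : E) * σ₁ (σ₂ (e : E))) ↔
        e ∈ Subgroup.closure {x : Eˣ | (x : E) ∈ Algebra.adjoin F ({s₁} : Set E) ∨
          (x : E) ∈ Algebra.adjoin F ({s₂} : Set E)}) := by
  set τ : E ≃ₐ[F] E := σ₂.trans σ₁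
  have hτ₁ : τ s₁ = -s₁ := by simp [τ, hσ₂₁, hσ₁₁]
  have hτ₂ : τ s₂ = -s₂ := by simp [τ, hσ₂₂, hσ₁₂]
  intro e
  constructor
  · rintro ⟨f, -, hf⟩
    obtain ⟨c₀, c₁, c₂, c₃, he⟩ :=
      exists_eq_biquadratic_of_mem_adjoin_pair hs₁ hs₂ (htop ▸ mem_top : (e : E) ∈ _)
    rw [he] at hf
    obtain ⟨x, hx, y, hy, hxy⟩ := exists_mem_adjoin_mul_eq_of_mul_eq_mul s₁ s₂
      (mul_eq_mul_of_biquadratic_mul_apply_eq_algebraMap hchar ha₁₂ hs₁ hs₂ hτ₁ hτ₂ hf)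
    exact Subgroup.mem_closure_of_coe_eq_mul e hx hy (he.trans hxy)
  · refine fun he => (Subgroup.closure_le (baseNormSubgroup τ)).mpr ?_ he
    rintro u (hu | hu)
    exacts [mem_baseNormSubgroup_of_mem_adjoin hs₁ hτ₁ hu,
      mem_baseNormSubgroup_of_mem_adjoin hs₂ hτ₂ hu]

/-- For a biquadratic extension `E = F(√a₁, √a₂)` with intermediate fields
`E₁ = F(√a₁)`, `E₂ = F(√a₂)`, `E₃ = F(√(a₁a₂))`, one has
`{e ∈ E^× : N_{E/E₃}(e) ∈ F^×} = ⟨E₁^×, E₂^×⟩`, the subgroup of `E^×`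
generated by `E₁^×` and `E₂^×`. -/
theorem biquadratic_norm_in_F_eq_subgroup
    (F E : Type*) [Field F] [Field E] [Algebra F E]
    (hchar : (2 : F) ≠ 0)
    (a₁ a₂ : F) (ha₁ : ¬ IsSquare a₁) (ha₂ : ¬ IsSquare a₂)
    (ha₁₂ : ¬ IsSquare (a₁ * a₂))
    (s₁ s₂ : E)
    (hs₁ : s₁ ^ 2 = algebraMap F E a₁) (hs₂ : s₂ ^ 2 = algebraMap F E a₂)
    (htop : Algebra.adjoin F ({s₁, s₂} : Set E) = ⊤)
    (σ₁ σ₂ : E ≃ₐ[F] E)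
    (hσ₁₁ : σ₁ s₁ = s₁) (hσ₁₂ : σ₁ s₂ = -s₂)
    (hσ₂₁ : σ₂ s₁ = -s₁) (hσ₂₂ : σ₂ s₂ = s₂) :
    ∀ e : Eˣ,
      ((∃ f : F, f ≠ 0 ∧ algebraMap F E f = (e : E) * σ₁ (σ₂ (e : E))) ↔
        e ∈ Subgroup.closure {x : Eˣ | (x : E) ∈ Algebra.adjoin F ({s₁} : Set E) ∨
          (x : E) ∈ Algebra.adjoin F ({s₂} : Set E)}) :=
  biquadratic_norm_in_F_eq_subgroup_general F E hchar a₁ a₂ ha₁₂ s₁ s₂ hs₁ hs₂ htop σ₁ σ₂ hσ₁₁ hσ₁₂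
    hσ₂₁ hσ₂₂
end

section
/- Let E = F(√a₁, √a₂) be a biquadratic extension of F with Galois group G generated by σ₁, σ₂ as above, with E₁ = F(√a₁), E₂ = F(√a₂), E₃ = F(√(a₁a₂)). Then {e ∈ E^× : N_{E/E₃}(e) ∈ F^×} = {e ∈ E^× : N_{E/E₃}(e) ∈ N_{E₁/F}(E₁^×) · N_{E₂/F}(E₂^×)}, where the right-hand product denotes the set of all products of an element of N_{E₁/F}(E₁^×) with an element of N_{E₂/F}(E₂^×). -/
/-!
Write `e = a + b√a₁ + c√a₂ + d√a₁√a₂`. Then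
`N_{E/E₃}(e) = (a² - a₁b² - a₂c² + a₁a₂d²) + 2(ad - bc)√a₁√a₂`, and since `√a₁√a₂ ∉ F` and
`2 ≠ 0`, this norm lies in `F` exactly when `ad = bc`. That says the coordinate matrix
`[[a, c], [b, d]]` has rank at most one, i.e. `e = (x₁ + y₁√a₁)(x₂ + y₂√a₂)`, and then
`N_{E/E₃}(e) = (x₁² - a₁y₁²)(x₂² - a₂y₂²)`.
-/

section Coordinates

variable {F E : Type*} [CommRing F] [CommRing E] [Algebra F E] {s₁ s₂ : E} {a₁ a₂ : F}

theorem exists_coords_of_mem_adjoin_pair (hs₁ : s₁ ^ 2 = algebraMap F E a₁)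
    (hs₂ : s₂ ^ 2 = algebraMap F E a₂) {x : E} (hx : x ∈ Algebra.adjoin F {s₁, s₂}) :
    ∃ a b c d : F, x = algebraMap F E a + algebraMap F E b * s₁ + algebraMap F E c * s₂ +
      algebraMap F E d * (s₁ * s₂) := by
  set A := algebraMap F E
  induction hx using Algebra.adjoin_induction with
  | mem x hx =>
    rcases hx with rfl | rfl
    · exact ⟨0, 1, 0, 0, by simp⟩
    · exact ⟨0, 0, 1, 0, by simp⟩
  | algebraMap r => exact ⟨r, 0, 0, 0, by simp [A]⟩
  | add x y _ _ hx hy =>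
    obtain ⟨a, b, c, d, rfl⟩ := hx
    obtain ⟨a', b', c', d', rfl⟩ := hy
    exact ⟨a + a', b + b', c + c', d + d', by simp only [map_add]; ring⟩
  | mul x y _ _ hx hy =>
    obtain ⟨a, b, c, d, rfl⟩ := hx
    obtain ⟨a', b', c', d', rfl⟩ := hy
    refine ⟨a * a' + a₁ * (b * b') + a₂ * (c * c') + a₁ * a₂ * (d * d'),
      a * b' + b * a' + a₂ * (c * d' + d * c'),
      a * c' + c * a' + a₁ * (b * d' + d * b'),
      a * d' + d * a' + b * c' + c * b', ?_⟩
    simp only [map_add, map_mul]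
    linear_combination (A b * A b' + (A b * A d' + A d * A b') * s₂ + A d * A d' * s₂ ^ 2) * hs₁
      + (A c * A c' + (A c * A d' + A d * A c') * s₁ + A d * A d' * A a₁) * hs₂

theorem mul_map_eq_of_map_eq_neg {G : Type*} [FunLike G E E] [AlgHomClass G F E E] {τ : G}
    (hs₁ : s₁ ^ 2 = algebraMap F E a₁) (hs₂ : s₂ ^ 2 = algebraMap F E a₂)
    (hτ₁ : τ s₁ = -s₁) (hτ₂ : τ s₂ = -s₂) (a b c d : F) :
    let e := algebraMap F E a + algebraMap F E b * s₁ + algebraMap F E c * s₂ +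
      algebraMap F E d * (s₁ * s₂)
    e * τ e = algebraMap F E (a ^ 2 - a₁ * b ^ 2 - a₂ * c ^ 2 + a₁ * a₂ * d ^ 2) +
      algebraMap F E (2 * (a * d - b * c)) * (s₁ * s₂) := by
  simp only [map_add, map_mul, AlgHomClass.commutes, hτ₁, hτ₂, map_sub, map_pow, map_ofNat]
  set A := algebraMap F E
  linear_combination (A d * A d * s₂ ^ 2 - A b * A b) * hs₁ + (A d * A d * A a₁ - A c * A c) * hs₂

end Coordinates

theorem eq_zero_of_algebraMap_eq_add_mul {F E : Type*} [Field F] [Ring E] [Nontrivial E]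
    [Algebra F E] {s : E} {a f p q : F} (hs : s ^ 2 = algebraMap F E a) (ha : ¬IsSquare a)
    (h : algebraMap F E f = algebraMap F E p + algebraMap F E q * s) : q = 0 := by
  by_contra hq
  set A := algebraMap F E
  have hs_mem : s = A (q⁻¹ * (f - p)) := by
    calc s = A (q⁻¹ * q) * s := by rw [inv_mul_cancel₀ hq, map_one, one_mul]
      _ = A (q⁻¹ * (f - p)) := by rw [map_mul, mul_assoc, map_mul, map_sub, h, add_sub_cancel_left]
  refine ha ⟨q⁻¹ * (f - p), A.injective ?_⟩
  rw [← hs, hs_mem, sq, ← map_mul]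

theorem exists_eq_mul_of_mul_eq_mul {F : Type*} [Field F] {a b c d : F} (h : a * d = b * c) :
    ∃ x₁ y₁ x₂ y₂ : F, a = x₁ * x₂ ∧ b = y₁ * x₂ ∧ c = x₁ * y₂ ∧ d = y₁ * y₂ := by
  by_cases ha : a = 0
  · subst ha
    by_cases hb : b = 0
    · exact ⟨c, d, 0, 1, by simp [hb]⟩
    · have hc : c = 0 := (mul_eq_zero.mp (h.symm.trans (zero_mul d))).resolve_left hb
      exact ⟨0, b, 1, d / b, by simp [hc, mul_div_cancel₀ d hb]⟩
  · refine ⟨a, b, 1, c / a, by simp, by simp, by field_simp, ?_⟩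
    field_simp
    linear_combination h

theorem biquadratic_norm_in_F_eq_norm_in_product_general
    (F E : Type*) [Field F] [Field E] [Algebra F E]
    (hchar : (2 : F) ≠ 0)
    (a₁ a₂ : F)
    (ha₁₂ : ¬ IsSquare (a₁ * a₂))
    (s₁ s₂ : E)
    (hs₁ : s₁ ^ 2 = algebraMap F E a₁) (hs₂ : s₂ ^ 2 = algebraMap F E a₂)
    (htop : Algebra.adjoin F ({s₁, s₂} : Set E) = ⊤)
    (σ₁ σ₂ : E ≃ₐ[F] E)
    (hσ₁₁ : σ₁ s₁ = s₁) (hσ₁₂ : σ₁ s₂ = -s₂)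
    (hσ₂₁ : σ₂ s₁ = -s₁) (hσ₂₂ : σ₂ s₂ = s₂) :
    ∀ e : E, e ≠ 0 →
      ((∃ f : F, f ≠ 0 ∧ algebraMap F E f = e * σ₁ (σ₂ e)) ↔
        (∃ x₁ y₁ x₂ y₂ : F, x₁ ^ 2 - a₁ * y₁ ^ 2 ≠ 0 ∧
          x₂ ^ 2 - a₂ * y₂ ^ 2 ≠ 0 ∧
          algebraMap F E ((x₁ ^ 2 - a₁ * y₁ ^ 2) * (x₂ ^ 2 - a₂ * y₂ ^ 2)) =
            e * σ₁ (σ₂ e))) := by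
  intro e _
  refine ⟨fun ⟨f, hf0, hf⟩ => ?_, fun ⟨x₁, y₁, x₂, y₂, h₁, h₂, h⟩ => ⟨_, mul_ne_zero h₁ h₂, h⟩⟩
  obtain ⟨a, b, c, d, rfl⟩ :=
    exists_coords_of_mem_adjoin_pair hs₁ hs₂ (htop ▸ Algebra.mem_top : e ∈ _)
  have hN := mul_map_eq_of_map_eq_neg (τ := σ₂.trans σ₁) hs₁ hs₂
    (by simp [hσ₁₁, hσ₂₁]) (by simp [hσ₁₂, hσ₂₂]) a b c d
  simp only [AlgEquiv.trans_apply] at hN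
  have hs₁₂ : (s₁ * s₂) ^ 2 = algebraMap F E (a₁ * a₂) := by rw [mul_pow, hs₁, hs₂, map_mul]
  have hq := eq_zero_of_algebraMap_eq_add_mul hs₁₂ ha₁₂ (hf.trans hN)
  rw [hq, map_zero, zero_mul, add_zero] at hN
  obtain ⟨x₁, y₁, x₂, y₂, rfl, rfl, rfl, rfl⟩ :=
    exists_eq_mul_of_mul_eq_mul (sub_eq_zero.mp ((mul_eq_zero.mp hq).resolve_left hchar))
  rw [show (x₁ * x₂) ^ 2 - a₁ * (y₁ * x₂) ^ 2 - a₂ * (x₁ * y₂) ^ 2 + a₁ * a₂ * (y₁ * y₂) ^ 2 =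
    (x₁ ^ 2 - a₁ * y₁ ^ 2) * (x₂ ^ 2 - a₂ * y₂ ^ 2) by ring] at hN
  obtain ⟨h₁, h₂⟩ := mul_ne_zero_iff.mp ((algebraMap F E).injective (hf.trans hN) ▸ hf0)
  exact ⟨x₁, y₁, x₂, y₂, h₁, h₂, hN.symm⟩

/-- For a biquadratic extension `E = F(√a₁, √a₂)` with `E₃ = F(√(a₁a₂))`:
`{e ∈ E^× : N_{E/E₃}(e) ∈ F^×}` equals
`{e ∈ E^× : N_{E/E₃}(e) ∈ N_{E₁/F}(E₁^×) · N_{E₂/F}(E₂^×)}`, where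
`N_{Eᵢ/F}(x + y√aᵢ) = x² − aᵢ y²`. -/
theorem biquadratic_norm_in_F_eq_norm_in_product
    (F E : Type*) [Field F] [Field E] [Algebra F E]
    (hchar : (2 : F) ≠ 0)
    (a₁ a₂ : F) (ha₁ : ¬ IsSquare a₁) (ha₂ : ¬ IsSquare a₂)
    (ha₁₂ : ¬ IsSquare (a₁ * a₂))
    (s₁ s₂ : E)
    (hs₁ : s₁ ^ 2 = algebraMap F E a₁) (hs₂ : s₂ ^ 2 = algebraMap F E a₂)
    (htop : Algebra.adjoin F ({s₁, s₂} : Set E) = ⊤)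
    (σ₁ σ₂ : E ≃ₐ[F] E)
    (hσ₁₁ : σ₁ s₁ = s₁) (hσ₁₂ : σ₁ s₂ = -s₂)
    (hσ₂₁ : σ₂ s₁ = -s₁) (hσ₂₂ : σ₂ s₂ = s₂) :
    ∀ e : E, e ≠ 0 →
      ((∃ f : F, f ≠ 0 ∧ algebraMap F E f = e * σ₁ (σ₂ e)) ↔
        (∃ x₁ y₁ x₂ y₂ : F, x₁ ^ 2 - a₁ * y₁ ^ 2 ≠ 0 ∧
          x₂ ^ 2 - a₂ * y₂ ^ 2 ≠ 0 ∧
          algebraMap F E ((x₁ ^ 2 - a₁ * y₁ ^ 2) * (x₂ ^ 2 - a₂ * y₂ ^ 2)) =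
            e * σ₁ (σ₂ e))) :=
  biquadratic_norm_in_F_eq_norm_in_product_general F E hchar a₁ a₂ ha₁₂ s₁ s₂ hs₁ hs₂ htop σ₁ σ₂
    hσ₁₁ hσ₁₂ hσ₂₁ hσ₂₂
end

section
/- Let E = F(√a₁, √a₂) be a biquadratic extension of F with Galois group G generated by σ₁, σ₂ as above, with E₁ = F(√a₁), E₂ = F(√a₂), E₃ = F(√(a₁a₂)). Then the following five subsets of E^× coincide: K₁ = ker(1−σ₁)(1−σ₂), K₂ = ker(1−σ₁)·ker(1−σ₂), K₃ = ⟨E₁^×, E₂^×⟩, K₄ = {e ∈ E^× : N_{E/E₃}(e) ∈ F^×}, and K₅ = {e ∈ E^× : N_{E/E₃}(e) ∈ N_{E₁/F}(E₁^×)·N_{E₂/F}(E₂^×)}. -/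
/-- **Theorem 4.** For a biquadratic extension `E = F(√a₁, √a₂)` with Galois
group generated by `σ₁, σ₂` and intermediate fields `E₁ = F(√a₁)`,
`E₂ = F(√a₂)`, `E₃ = F(√(a₁a₂))`, the following five subsets of `E^×`
coincide:
`K₁ = ker (1−σ₁)(1−σ₂)`, `K₂ = ker(1−σ₁)·ker(1−σ₂)`,
`K₃ = ⟨E₁^×, E₂^×⟩`, `K₄ = {e : N_{E/E₃}(e) ∈ F^×}`, and
`K₅ = {e : N_{E/E₃}(e) ∈ N_{E₁/F}(E₁^×)·N_{E₂/F}(E₂^×)}`. -/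
theorem biquadratic_five_sets
    (F E : Type*) [Field F] [Field E] [Algebra F E]
    (hchar : (2 : F) ≠ 0)
    (a₁ a₂ : F) (ha₁ : ¬ IsSquare a₁) (ha₂ : ¬ IsSquare a₂)
    (ha₁₂ : ¬ IsSquare (a₁ * a₂))
    (s₁ s₂ : E)
    (hs₁ : s₁ ^ 2 = algebraMap F E a₁) (hs₂ : s₂ ^ 2 = algebraMap F E a₂)
    (htop : Algebra.adjoin F ({s₁, s₂} : Set E) = ⊤)
    (σ₁ σ₂ : E ≃ₐ[F] E)
    (hσ₁₁ : σ₁ s₁ = s₁) (hσ₁₂ : σ₁ s₂ = -s₂)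
    (hσ₂₁ : σ₂ s₁ = -s₁) (hσ₂₂ : σ₂ s₂ = s₂)
    (K₁ K₂ K₃ K₄ K₅ : Set Eˣ)
    (hK₁ : K₁ = {e : Eˣ | (e : E) * σ₁ (σ₂ (e : E)) = σ₁ (e : E) * σ₂ (e : E)})
    (hK₂ : K₂ = {e : Eˣ | ∃ k₁ k₂ : Eˣ, σ₁ (k₁ : E) = (k₁ : E) ∧
      σ₂ (k₂ : E) = (k₂ : E) ∧ e = k₁ * k₂})
    (hK₃ : K₃ = (Subgroup.closure {x : Eˣ |
      (x : E) ∈ Algebra.adjoin F ({s₁} : Set E) ∨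
      (x : E) ∈ Algebra.adjoin F ({s₂} : Set E)} : Set Eˣ))
    (hK₄ : K₄ = {e : Eˣ | ∃ f : F, f ≠ 0 ∧
      algebraMap F E f = (e : E) * σ₁ (σ₂ (e : E))})
    (hK₅ : K₅ = {e : Eˣ | ∃ x₁ y₁ x₂ y₂ : F, x₁ ^ 2 - a₁ * y₁ ^ 2 ≠ 0 ∧
      x₂ ^ 2 - a₂ * y₂ ^ 2 ≠ 0 ∧
      algebraMap F E ((x₁ ^ 2 - a₁ * y₁ ^ 2) * (x₂ ^ 2 - a₂ * y₂ ^ 2)) =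
        (e : E) * σ₁ (σ₂ (e : E))}) :
    K₁ = K₂ ∧ K₂ = K₃ ∧ K₃ = K₄ ∧ K₄ = K₅ := by
  have hinj : Function.Injective (algebraMap F E) := (algebraMap F E).injective
  have h2E : (2 : E) ≠ 0 := by
    intro h
    exact hchar (hinj (by rw [map_ofNat, map_zero]; exact h))
  have hs₂0 : s₂ ≠ 0 := by
    intro h
    exact ha₂ ⟨0, hinj (by rw [← hs₂, h, map_mul, map_zero]; ring)⟩
  have lin2 : ∀ a c : F, algebraMap F E a + algebraMap F E c * s₂ = 0 → a = 0 ∧ c = 0 := by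
    intro a c h
    by_cases hc : c = 0
    · subst hc
      simp only [map_zero, zero_mul, add_zero] at h
      exact ⟨hinj (by rw [h, map_zero]), rfl⟩
    · exfalso
      apply ha₂
      have key : a₂ * c ^ 2 = a ^ 2 := by
        apply hinj
        rw [map_mul, map_pow, map_pow, ← hs₂]
        linear_combination (algebraMap F E c * s₂ - algebraMap F E a) * h
      exact ⟨a / c, by field_simp; linear_combination key⟩
  have lin4 : ∀ a b c d : F, algebraMap F E a + algebraMap F E b * s₁ + algebraMap F E c * s₂
      + algebraMap F E d * (s₁ * s₂) = 0 → a = 0 ∧ b = 0 ∧ c = 0 ∧ d = 0 := by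
    intro a b c d h
    by_cases hbd : b = 0 ∧ d = 0
    · obtain ⟨hb, hd⟩ := hbd
      subst hb; subst hd
      simp only [map_zero, zero_mul, add_zero, zero_add] at h
      obtain ⟨ha, hc⟩ := lin2 a c h
      exact ⟨ha, rfl, hc, rfl⟩
    · exfalso
      have hn : b ^ 2 - a₂ * d ^ 2 ≠ 0 := by
        intro h0
        by_cases hd : d = 0
        · apply hbd
          constructor
          · have : b ^ 2 = 0 := by rw [hd] at h0; linear_combination h0
            exact pow_eq_zero_iff (by norm_num) |>.mp this
          · exact hd
        · exact ha₂ ⟨b / d, by field_simp; linear_combination -h0⟩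
      set n := b ^ 2 - a₂ * d ^ 2 with hn_def
      set p := c * d * a₂ - a * b with hp_def
      set q := a * d - b * c with hq_def
      have key1 : algebraMap F E n * s₁ = algebraMap F E p + algebraMap F E q * s₂ := by
        rw [hn_def, hp_def, hq_def]
        simp only [map_sub, map_mul, map_pow]
        linear_combination (algebraMap F E b - algebraMap F E d * s₂) * h +
          (algebraMap F E c * algebraMap F E d + (algebraMap F E d)^2 * s₁) * hs₂
      have key2 : algebraMap F E (n ^ 2 * a₁ - (p ^ 2 + q ^ 2 * a₂))
          + algebraMap F E (-(2 * p * q)) * s₂ = 0 := by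
        simp only [map_sub, map_mul, map_pow, map_add, map_neg, map_ofNat]
        linear_combination (algebraMap F E n * s₁ + algebraMap F E p + algebraMap F E q * s₂) * key1
          - (algebraMap F E n)^2 * hs₁ + (algebraMap F E q)^2 * hs₂
      obtain ⟨hA, hC⟩ := lin2 _ _ key2
      have hpq : p * q = 0 := by
        have h2 : (2 : F) * (p * q) = 0 := by linear_combination -hC
        rcases mul_eq_zero.mp h2 with h' | h'
        · exact absurd h' hchar
        · exact h'
      rcases mul_eq_zero.mp hpq with hp0 | hq0
      · apply ha₁₂
        refine ⟨q * a₂ / n, ?_⟩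
        field_simp
        rw [hp0] at hA
        linear_combination a₂ * hA
      · apply ha₁
        refine ⟨p / n, ?_⟩
        field_simp
        rw [hq0] at hA
        linear_combination hA
  have hmem : ∀ x : E, x ∈ Algebra.adjoin F ({s₁, s₂} : Set E) := by
    intro x; rw [htop]; trivial
  have repr : ∀ x : E, ∃ a b c d : F, x = algebraMap F E a + algebraMap F E b * s₁
      + algebraMap F E c * s₂ + algebraMap F E d * (s₁ * s₂) := by
    intro x
    induction hmem x using Algebra.adjoin_induction with
    | mem y hy =>
      rcases hy with hy | hy
      · exact ⟨0, 1, 0, 0, by rw [hy]; simp⟩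
      · exact ⟨0, 0, 1, 0, by rw [Set.mem_singleton_iff.mp hy]; simp⟩
    | algebraMap r => exact ⟨r, 0, 0, 0, by simp⟩
    | add x y hx hy ihx ihy =>
      obtain ⟨a, b, c, d, hx'⟩ := ihx
      obtain ⟨a', b', c', d', hy'⟩ := ihy
      exact ⟨a + a', b + b', c + c', d + d', by rw [hx', hy']; simp only [map_add]; ring⟩
    | mul x y hx hy ihx ihy =>
      obtain ⟨a, b, c, d, hx'⟩ := ihx
      obtain ⟨a', b', c', d', hy'⟩ := ihy
      refine ⟨a * a' + a₁ * (b * b') + a₂ * (c * c') + a₁ * a₂ * (d * d'),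
        a * b' + a' * b + a₂ * (c * d' + c' * d),
        a * c' + a' * c + a₁ * (b * d' + b' * d),
        a * d' + a' * d + b * c' + b' * c, ?_⟩
      rw [hx', hy']
      simp only [map_add, map_mul]
      linear_combination (algebraMap F E b * algebraMap F E b'
          + (algebraMap F E b * algebraMap F E d' + algebraMap F E b' * algebraMap F E d) * s₂
          + algebraMap F E d * algebraMap F E d' * s₂ ^ 2) * hs₁
        + (algebraMap F E c * algebraMap F E c'
          + (algebraMap F E c * algebraMap F E d' + algebraMap F E c' * algebraMap F E d) * s₁
          + algebraMap F E d * algebraMap F E d' * algebraMap F E a₁) * hs₂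
  have comm : ∀ x : E, σ₁ (σ₂ x) = σ₂ (σ₁ x) := by
    intro x
    induction hmem x using Algebra.adjoin_induction with
    | mem y hy =>
      rcases hy with hy | hy
      · simp [hy, hσ₁₁, hσ₂₁]
      · simp [Set.mem_singleton_iff.mp hy, hσ₁₂, hσ₂₂]
    | algebraMap r => simp
    | add x y hx hy ihx ihy => simp only [map_add, ihx, ihy]
    | mul x y hx hy ihx ihy => simp only [map_mul, ihx, ihy]
  have inv₁ : ∀ x : E, σ₁ (σ₁ x) = x := by
    intro x
    induction hmem x using Algebra.adjoin_induction with
    | mem y hy =>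
      rcases hy with hy | hy
      · rw [hy, hσ₁₁, hσ₁₁]
      · rw [Set.mem_singleton_iff.mp hy, hσ₁₂, map_neg, hσ₁₂, neg_neg]
    | algebraMap r => simp
    | add x y hx hy ihx ihy => simp only [map_add, ihx, ihy]
    | mul x y hx hy ihx ihy => simp only [map_mul, ihx, ihy]
  have inv₂ : ∀ x : E, σ₂ (σ₂ x) = x := by
    intro x
    induction hmem x using Algebra.adjoin_induction with
    | mem y hy =>
      rcases hy with hy | hy
      · rw [hy, hσ₂₁, map_neg, hσ₂₁, neg_neg]
      · rw [Set.mem_singleton_iff.mp hy, hσ₂₂, hσ₂₂]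
    | algebraMap r => simp
    | add x y hx hy ihx ihy => simp only [map_add, ihx, ihy]
    | mul x y hx hy ihx ihy => simp only [map_mul, ihx, ihy]
  have act₁ : ∀ a b c d : F, σ₁ (algebraMap F E a + algebraMap F E b * s₁
      + algebraMap F E c * s₂ + algebraMap F E d * (s₁ * s₂))
      = algebraMap F E a + algebraMap F E b * s₁ - algebraMap F E c * s₂
        - algebraMap F E d * (s₁ * s₂) := by
    intro a b c d
    simp only [map_add, map_mul, AlgEquiv.commutes, hσ₁₁, hσ₁₂]
    ring
  have act₂ : ∀ a b c d : F, σ₂ (algebraMap F E a + algebraMap F E b * s₁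
      + algebraMap F E c * s₂ + algebraMap F E d * (s₁ * s₂))
      = algebraMap F E a - algebraMap F E b * s₁ + algebraMap F E c * s₂
        - algebraMap F E d * (s₁ * s₂) := by
    intro a b c d
    simp only [map_add, map_mul, AlgEquiv.commutes, hσ₂₁, hσ₂₂]
    ring
  have act₁₂ : ∀ a b c d : F, σ₁ (σ₂ (algebraMap F E a + algebraMap F E b * s₁
      + algebraMap F E c * s₂ + algebraMap F E d * (s₁ * s₂)))
      = algebraMap F E a - algebraMap F E b * s₁ - algebraMap F E c * s₂
        + algebraMap F E d * (s₁ * s₂) := by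
    intro a b c d
    simp only [map_add, map_mul, map_neg, AlgEquiv.commutes, hσ₂₁, hσ₂₂, hσ₁₁, hσ₁₂]
    ring
  -- u fixed by σ₁ iff of the form a + b s₁, etc.
  have two_ne : ∀ x : F, 2 * x = 0 → x = 0 := by
    intro x hx
    rcases mul_eq_zero.mp hx with h | h
    · exact absurd h hchar
    · exact h
  have fix₁ : ∀ x : E, σ₁ x = x → ∃ a b : F, x = algebraMap F E a + algebraMap F E b * s₁ := by
    intro x hx
    obtain ⟨a, b, c, d, hr⟩ := repr x
    have h0 : algebraMap F E 0 + algebraMap F E 0 * s₁ + algebraMap F E (2 * c) * s₂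
        + algebraMap F E (2 * d) * (s₁ * s₂) = 0 := by
      have := hx
      rw [hr] at this
      rw [act₁ a b c d] at this
      simp only [map_zero, zero_mul, add_zero, zero_add, map_mul, map_ofNat]
      linear_combination -this
    obtain ⟨-, -, hc, hd⟩ := lin4 _ _ _ _ h0
    refine ⟨a, b, ?_⟩
    rw [hr, two_ne c hc, two_ne d hd]
    simp
  have fix₂ : ∀ x : E, σ₂ x = x → ∃ a c : F, x = algebraMap F E a + algebraMap F E c * s₂ := by
    intro x hx
    obtain ⟨a, b, c, d, hr⟩ := repr x
    have h0 : algebraMap F E 0 + algebraMap F E (2 * b) * s₁ + algebraMap F E 0 * s₂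
        + algebraMap F E (2 * d) * (s₁ * s₂) = 0 := by
      have := hx
      rw [hr] at this
      rw [act₂ a b c d] at this
      simp only [map_zero, zero_mul, add_zero, zero_add, map_mul, map_ofNat]
      linear_combination -this
    obtain ⟨-, hb, -, hd⟩ := lin4 _ _ _ _ h0
    refine ⟨a, c, ?_⟩
    rw [hr, two_ne b hb, two_ne d hd]
    simp
  have fixF : ∀ x : E, σ₁ x = x → σ₁ (σ₂ x) = x → ∃ a : F, x = algebraMap F E a := by
    intro x hx1 hx12
    obtain ⟨a, b, c, d, hr⟩ := repr x
    have e1 := hx1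
    rw [hr, act₁ a b c d] at e1
    have h0 : algebraMap F E 0 + algebraMap F E 0 * s₁ + algebraMap F E (2 * c) * s₂
        + algebraMap F E (2 * d) * (s₁ * s₂) = 0 := by
      simp only [map_zero, zero_mul, add_zero, zero_add, map_mul, map_ofNat]
      linear_combination -e1
    obtain ⟨-, -, hc, hd⟩ := lin4 _ _ _ _ h0
    have e2 := hx12
    rw [hr, act₁₂ a b c d] at e2
    have h0' : algebraMap F E 0 + algebraMap F E (2 * b) * s₁ + algebraMap F E (2 * c) * s₂
        + algebraMap F E 0 * (s₁ * s₂) = 0 := by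
      simp only [map_zero, zero_mul, add_zero, zero_add, map_mul, map_ofNat]
      linear_combination -e2
    obtain ⟨-, hb, -, -⟩ := lin4 _ _ _ _ h0'
    refine ⟨a, ?_⟩
    rw [hr, two_ne b hb, two_ne c hc, two_ne d hd]
    simp
  have hσ₁ne : ∀ x : E, x ≠ 0 → σ₁ x ≠ 0 := by
    intro x hx h
    exact hx (σ₁.injective (by rw [h, map_zero]))
  have hσ₂ne : ∀ x : E, x ≠ 0 → σ₂ x ≠ 0 := by
    intro x hx h
    exact hx (σ₂.injective (by rw [h, map_zero]))
  have adj₁fix : ∀ x : E, x ∈ Algebra.adjoin F ({s₁} : Set E) → σ₁ x = x := by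
    intro x hx
    induction hx using Algebra.adjoin_induction with
    | mem y hy => rw [Set.mem_singleton_iff.mp hy, hσ₁₁]
    | algebraMap r => simp
    | add x y hx hy ihx ihy => rw [map_add, ihx, ihy]
    | mul x y hx hy ihx ihy => rw [map_mul, ihx, ihy]
  have adj₂fix : ∀ x : E, x ∈ Algebra.adjoin F ({s₂} : Set E) → σ₂ x = x := by
    intro x hx
    induction hx using Algebra.adjoin_induction with
    | mem y hy => rw [Set.mem_singleton_iff.mp hy, hσ₂₂]
    | algebraMap r => simp
    | add x y hx hy ihx ihy => rw [map_add, ihx, ihy]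
    | mul x y hx hy ihx ihy => rw [map_mul, ihx, ihy]
  have mem_adj₁ : ∀ a b : F, algebraMap F E a + algebraMap F E b * s₁
      ∈ Algebra.adjoin F ({s₁} : Set E) := by
    intro a b
    exact add_mem (Subalgebra.algebraMap_mem _ _)
      (mul_mem (Subalgebra.algebraMap_mem _ _) (Algebra.subset_adjoin rfl))
  have mem_adj₂ : ∀ a c : F, algebraMap F E a + algebraMap F E c * s₂
      ∈ Algebra.adjoin F ({s₂} : Set E) := by
    intro a c
    exact add_mem (Subalgebra.algebraMap_mem _ _)
      (mul_mem (Subalgebra.algebraMap_mem _ _) (Algebra.subset_adjoin rfl))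
  -- the inclusions
  have hK₁₂ : K₁ ⊆ K₂ := by
    rw [hK₁, hK₂]
    intro e he
    simp only [Set.mem_setOf_eq] at he ⊢
    by_cases hu : (e : E) + σ₁ (e : E) = 0
    · have hσe : σ₁ (e : E) = -(e : E) := eq_neg_of_add_eq_zero_right hu
      refine ⟨Units.mk0 s₂ hs₂0 * e, (Units.mk0 s₂ hs₂0)⁻¹, ?_, ?_, ?_⟩
      · simp only [Units.val_mul, Units.val_mk0, map_mul, hσ₁₂, hσe]
        ring
      · simp only [Units.val_inv_eq_inv_val, Units.val_mk0, map_inv₀, hσ₂₂]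
      · rw [mul_comm (Units.mk0 s₂ hs₂0) e, mul_inv_cancel_right]
    · have hσ₂u : σ₂ ((e : E) + σ₁ (e : E)) ≠ 0 := hσ₂ne _ hu
      refine ⟨Units.mk0 _ hu, (Units.mk0 _ hu)⁻¹ * e, ?_, ?_, (mul_inv_cancel_left _ _).symm⟩
      · simp only [Units.val_mk0, map_add, inv₁]
        ring
      · simp only [Units.val_mul, Units.val_inv_eq_inv_val, Units.val_mk0, map_mul, map_inv₀]
        rw [inv_mul_eq_div, inv_mul_eq_div, div_eq_div_iff hσ₂u hu]
        rw [map_add, ← comm]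
        linear_combination -he
  have hK₂₁ : K₂ ⊆ K₁ := by
    rw [hK₁, hK₂]
    rintro e ⟨k₁, k₂, hk₁, hk₂, hke⟩
    simp only [Set.mem_setOf_eq, hke, Units.val_mul, map_mul]
    rw [comm (k₁ : E), hk₁, hk₂]
    ring
  have hK₂₃ : K₂ ⊆ K₃ := by
    rw [hK₂, hK₃]
    rintro e ⟨k₁, k₂, hk₁, hk₂, hke⟩
    obtain ⟨a, b, hr₁⟩ := fix₁ _ hk₁
    obtain ⟨a', c', hr₂⟩ := fix₂ _ hk₂
    rw [hke]
    exact Subgroup.mul_mem _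
      (Subgroup.subset_closure (Or.inl (hr₁ ▸ mem_adj₁ a b)))
      (Subgroup.subset_closure (Or.inr (hr₂ ▸ mem_adj₂ a' c')))
  have hK₃₂ : K₃ ⊆ K₂ := by
    rw [hK₂, hK₃]
    set H : Subgroup Eˣ :=
      { carrier := {e : Eˣ | ∃ k₁ k₂ : Eˣ, σ₁ (k₁ : E) = (k₁ : E) ∧
          σ₂ (k₂ : E) = (k₂ : E) ∧ e = k₁ * k₂}
        one_mem' := ⟨1, 1, by simp, by simp, by simp⟩
        mul_mem' := by
          rintro x y ⟨k₁, k₂, hk₁, hk₂, hkx⟩ ⟨l₁, l₂, hl₁, hl₂, hly⟩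
          refine ⟨k₁ * l₁, k₂ * l₂, ?_, ?_, by rw [hkx, hly]; exact mul_mul_mul_comm k₁ k₂ l₁ l₂⟩
          · simp only [Units.val_mul, map_mul, hk₁, hl₁]
          · simp only [Units.val_mul, map_mul, hk₂, hl₂]
        inv_mem' := by
          rintro x ⟨k₁, k₂, hk₁, hk₂, hkx⟩
          refine ⟨k₁⁻¹, k₂⁻¹, ?_, ?_, by rw [hkx, mul_inv_rev, mul_comm]⟩
          · simp only [Units.val_inv_eq_inv_val, map_inv₀, hk₁]
          · simp only [Units.val_inv_eq_inv_val, map_inv₀, hk₂] } with hH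
    intro e he
    have hle : Subgroup.closure {x : Eˣ |
        (x : E) ∈ Algebra.adjoin F ({s₁} : Set E) ∨
        (x : E) ∈ Algebra.adjoin F ({s₂} : Set E)} ≤ H := by
      rw [Subgroup.closure_le]
      rintro x (hx | hx)
      · exact ⟨x, 1, adj₁fix _ hx, by simp, by simp⟩
      · exact ⟨1, x, by simp, adj₂fix _ hx, by simp⟩
    exact hle he
  have hK₁₄ : K₁ ⊆ K₄ := by
    rw [hK₁, hK₄]
    intro e he
    simp only [Set.mem_setOf_eq] at he ⊢
    have hfix1 : σ₁ ((e : E) * σ₁ (σ₂ (e : E))) = (e : E) * σ₁ (σ₂ (e : E)) := by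
      rw [map_mul, inv₁, ← he]
    have hfix12 : σ₁ (σ₂ ((e : E) * σ₁ (σ₂ (e : E)))) = (e : E) * σ₁ (σ₂ (e : E)) := by
      rw [map_mul, map_mul, comm (σ₁ (σ₂ (e : E))), inv₁ (σ₂ (e : E)), inv₂ (e : E)]
      ring
    obtain ⟨f, hf⟩ := fixF _ hfix1 hfix12
    refine ⟨f, ?_, hf.symm⟩
    intro hf0
    rw [hf0, map_zero] at hf
    exact (mul_ne_zero (Units.ne_zero e) (hσ₁ne _ (hσ₂ne _ (Units.ne_zero e)))) hf
  have hK₄₁ : K₄ ⊆ K₁ := by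
    rw [hK₁, hK₄]
    rintro e ⟨f, hf0, hf⟩
    simp only [Set.mem_setOf_eq]
    have h1 : σ₁ (algebraMap F E f) = algebraMap F E f := AlgEquiv.commutes _ _
    rw [hf] at h1
    rw [map_mul, inv₁] at h1
    exact h1.symm
  have hK₂₅ : K₂ ⊆ K₅ := by
    rw [hK₂, hK₅]
    rintro e ⟨k₁, k₂, hk₁, hk₂, hke⟩
    simp only [Set.mem_setOf_eq]
    obtain ⟨x₁, y₁, hr₁⟩ := fix₁ _ hk₁
    obtain ⟨x₂, y₂, hr₂⟩ := fix₂ _ hk₂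
    have norm1 : (k₁ : E) * σ₂ (k₁ : E) = algebraMap F E (x₁ ^ 2 - a₁ * y₁ ^ 2) := by
      rw [hr₁]
      simp only [map_add, map_mul, AlgEquiv.commutes, hσ₂₁, map_sub, map_pow]
      linear_combination (- (algebraMap F E y₁)^2) * hs₁
    have norm2 : (k₂ : E) * σ₁ (k₂ : E) = algebraMap F E (x₂ ^ 2 - a₂ * y₂ ^ 2) := by
      rw [hr₂]
      simp only [map_add, map_mul, AlgEquiv.commutes, hσ₁₂, map_sub, map_pow]
      linear_combination (- (algebraMap F E y₂)^2) * hs₂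
    refine ⟨x₁, y₁, x₂, y₂, ?_, ?_, ?_⟩
    · intro h0
      have := norm1
      rw [h0, map_zero] at this
      exact (mul_ne_zero (Units.ne_zero k₁) (hσ₂ne _ (Units.ne_zero k₁))) this
    · intro h0
      have := norm2
      rw [h0, map_zero] at this
      exact (mul_ne_zero (Units.ne_zero k₂) (hσ₁ne _ (Units.ne_zero k₂))) this
    · rw [map_mul, ← norm1, ← norm2, hke]
      simp only [Units.val_mul, map_mul]
      rw [comm (k₁ : E), hk₁, hk₂]
      ring
  have hK₅₄ : K₅ ⊆ K₄ := by
    rw [hK₄, hK₅]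
    rintro e ⟨x₁, y₁, x₂, y₂, h1, h2, heq⟩
    exact ⟨_, mul_ne_zero h1 h2, heq⟩
  refine ⟨Set.Subset.antisymm hK₁₂ hK₂₁, Set.Subset.antisymm hK₂₃ hK₃₂,
    Set.Subset.antisymm (fun e he => hK₁₄ (hK₂₁ (hK₃₂ he))) (fun e he => hK₂₃ (hK₁₂ (hK₄₁ he))),
    Set.Subset.antisymm (fun e he => hK₂₅ (hK₁₂ (hK₄₁ he))) hK₅₄⟩
end

section
/- Let E = F(√a₁, √a₂) be a biquadratic extension of F with intermediate fields E₁ = F(√a₁), E₂ = F(√a₂), E₃ = F(√(a₁a₂)). Then N_{E/E₃}(E^×) ∩ F^× = N_{E₁/F}(E₁^×) · N_{E₂/F}(E₂^×). -/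
/-- **Equation (III).** For a biquadratic extension `E = F(√a₁, √a₂)` with
intermediate fields `E₁ = F(√a₁)`, `E₂ = F(√a₂)`, `E₃ = F(√(a₁a₂))`:
`N_{E/E₃}(E^×) ∩ F^× = N_{E₁/F}(E₁^×) · N_{E₂/F}(E₂^×)`, where
`N_{E/E₃}(e) = e·σ₁σ₂(e)` and `N_{Eᵢ/F}(x + y√aᵢ) = x² − aᵢ y²`. -/
theorem biquadratic_norm_intersection
    (F E : Type*) [Field F] [Field E] [Algebra F E]
    (hchar : (2 : F) ≠ 0)
    (a₁ a₂ : F) (ha₁ : ¬ IsSquare a₁) (ha₂ : ¬ IsSquare a₂)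
    (ha₁₂ : ¬ IsSquare (a₁ * a₂))
    (s₁ s₂ : E)
    (hs₁ : s₁ ^ 2 = algebraMap F E a₁) (hs₂ : s₂ ^ 2 = algebraMap F E a₂)
    (htop : Algebra.adjoin F ({s₁, s₂} : Set E) = ⊤)
    (σ₁ σ₂ : E ≃ₐ[F] E)
    (hσ₁₁ : σ₁ s₁ = s₁) (hσ₁₂ : σ₁ s₂ = -s₂)
    (hσ₂₁ : σ₂ s₁ = -s₁) (hσ₂₂ : σ₂ s₂ = s₂) :
    ∀ f : F,
      ((f ≠ 0 ∧ ∃ e : E, e ≠ 0 ∧ algebraMap F E f = e * σ₁ (σ₂ e)) ↔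
        (∃ x₁ y₁ x₂ y₂ : F, x₁ ^ 2 - a₁ * y₁ ^ 2 ≠ 0 ∧
          x₂ ^ 2 - a₂ * y₂ ^ 2 ≠ 0 ∧
          f = (x₁ ^ 2 - a₁ * y₁ ^ 2) * (x₂ ^ 2 - a₂ * y₂ ^ 2))) := by
  have hinj : Function.Injective (algebraMap F E) := (algebraMap F E).injective
  -- every element of E has a representation over the basis 1, s₁, s₂, s₁s₂
  have hrepall : ∀ z : E, ∃ c₀ c₁ c₂ c₃ : F,
      z = algebraMap F E c₀ + algebraMap F E c₁ * s₁ + algebraMap F E c₂ * s₂ +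
        algebraMap F E c₃ * (s₁ * s₂) := by
    intro z
    have hmem : z ∈ Algebra.adjoin F ({s₁, s₂} : Set E) := htop ▸ trivial
    induction hmem using Algebra.adjoin_induction with
    | mem x hx =>
      rcases hx with h | h
      · exact ⟨0, 1, 0, 0, by simp [h]⟩
      · exact ⟨0, 0, 1, 0, by simp [Set.mem_singleton_iff.mp h]⟩
    | algebraMap r => exact ⟨r, 0, 0, 0, by simp⟩
    | add x y hx hy ihx ihy =>
      obtain ⟨c₀, c₁, c₂, c₃, hc⟩ := ihx
      obtain ⟨d₀, d₁, d₂, d₃, hd⟩ := ihy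
      exact ⟨c₀ + d₀, c₁ + d₁, c₂ + d₂, c₃ + d₃, by rw [hc, hd]; simp only [map_add]; ring⟩
    | mul x y hx hy ihx ihy =>
      obtain ⟨c₀, c₁, c₂, c₃, hc⟩ := ihx
      obtain ⟨d₀, d₁, d₂, d₃, hd⟩ := ihy
      refine ⟨c₀ * d₀ + a₁ * (c₁ * d₁) + a₂ * (c₂ * d₂) + a₁ * a₂ * (c₃ * d₃),
        c₀ * d₁ + c₁ * d₀ + a₂ * (c₂ * d₃ + c₃ * d₂),
        c₀ * d₂ + c₂ * d₀ + a₁ * (c₁ * d₃ + c₃ * d₁),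
        c₀ * d₃ + c₃ * d₀ + c₁ * d₂ + c₂ * d₁, ?_⟩
      rw [hc, hd]
      simp only [map_add, map_mul]
      rw [← hs₁, ← hs₂]
      ring
  intro f
  constructor
  · rintro ⟨hf, e, he, heq⟩
    obtain ⟨c₀, c₁, c₂, c₃, hrep⟩ := hrepall e
    have hσe : σ₁ (σ₂ e) = algebraMap F E c₀ - algebraMap F E c₁ * s₁ -
        algebraMap F E c₂ * s₂ + algebraMap F E c₃ * (s₁ * s₂) := by
      rw [hrep]
      simp only [map_add, map_mul, AlgEquiv.commutes, hσ₁₁, hσ₁₂, hσ₂₁, hσ₂₂, map_neg,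
        mul_neg, neg_mul, neg_neg]
      ring
    set A : F := c₀ ^ 2 + a₁ * a₂ * c₃ ^ 2 - a₁ * c₁ ^ 2 - a₂ * c₂ ^ 2 with hA
    have key : algebraMap F E f =
        algebraMap F E A + algebraMap F E (2 * (c₀ * c₃ - c₁ * c₂)) * (s₁ * s₂) := by
      rw [heq, hσe, hrep, hA]
      simp only [map_add, map_mul, map_sub, map_pow, map_ofNat]
      rw [← hs₁, ← hs₂]
      ring
    have hB : (2 : F) * (c₀ * c₃ - c₁ * c₂) = 0 := by
      by_contra hB
      apply ha₁₂
      refine ⟨(f - A) / (2 * (c₀ * c₃ - c₁ * c₂)), ?_⟩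
      apply hinj
      have hBne : algebraMap F E (2 * (c₀ * c₃ - c₁ * c₂)) ≠ 0 := fun h =>
        hB (hinj (by rw [h, map_zero]))
      have hst : s₁ * s₂ = algebraMap F E ((f - A) / (2 * (c₀ * c₃ - c₁ * c₂))) := by
        rw [map_div₀, map_sub, eq_div_iff hBne, mul_comm, key]; ring
      have hsq : (s₁ * s₂) ^ 2 = algebraMap F E (a₁ * a₂) := by
        rw [mul_pow, hs₁, hs₂, map_mul]
      rw [hst, ← map_pow] at hsq
      rw [← hsq]
      congr 1
      ring
    have hcc : c₀ * c₃ = c₁ * c₂ := by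
      rcases mul_eq_zero.mp hB with h | h
      · exact absurd h hchar
      · exact sub_eq_zero.mp h
    have hfA : f = A := by
      apply hinj
      rw [key, hB, map_zero, zero_mul, add_zero]
    by_cases hc₀ : c₀ = 0
    · subst hc₀
      have hcc' : c₁ * c₂ = 0 := by rw [← hcc]; ring
      rcases mul_eq_zero.mp hcc' with h | h
      · subst h
        have hprod : f = (c₂ ^ 2 - a₁ * c₃ ^ 2) * ((0:F) ^ 2 - a₂ * 1 ^ 2) := by
          rw [hfA, hA]; ring
        exact ⟨c₂, c₃, 0, 1, fun h => hf (by rw [hprod, h, zero_mul]),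
          fun h => hf (by rw [hprod, h, mul_zero]), hprod⟩
      · subst h
        have hprod : f = ((0:F) ^ 2 - a₁ * 1 ^ 2) * (c₁ ^ 2 - a₂ * c₃ ^ 2) := by
          rw [hfA, hA]; ring
        exact ⟨0, 1, c₁, c₃, fun h => hf (by rw [hprod, h, zero_mul]),
          fun h => hf (by rw [hprod, h, mul_zero]), hprod⟩
    · have hprod : f = (c₀ ^ 2 - a₁ * c₁ ^ 2) * ((1:F) ^ 2 - a₂ * (c₂ / c₀) ^ 2) := by
        rw [hfA, hA]
        field_simp
        ring_nf
        linear_combination (a₁ * a₂ * (c₀ * c₃ + c₁ * c₂)) * hcc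
      exact ⟨c₀, c₁, 1, c₂ / c₀, fun h => hf (by rw [hprod, h, zero_mul]),
        fun h => hf (by rw [hprod, h, mul_zero]), hprod⟩
  · rintro ⟨x₁, y₁, x₂, y₂, h1, h2, hfeq⟩
    have hfne : f ≠ 0 := by rw [hfeq]; exact mul_ne_zero h1 h2
    set e : E := (algebraMap F E x₁ + algebraMap F E y₁ * s₁) *
      (algebraMap F E x₂ + algebraMap F E y₂ * s₂) with he
    have hσe : σ₁ (σ₂ e) = (algebraMap F E x₁ - algebraMap F E y₁ * s₁) *
        (algebraMap F E x₂ - algebraMap F E y₂ * s₂) := by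
      rw [he]
      simp only [map_add, map_mul, AlgEquiv.commutes, hσ₁₁, hσ₁₂, hσ₂₁, hσ₂₂, map_neg,
        mul_neg, neg_mul, neg_neg]
      ring
    have hnorm : algebraMap F E f = e * σ₁ (σ₂ e) := by
      rw [hσe, he, hfeq]
      simp only [map_mul, map_sub, map_pow]
      rw [← hs₁, ← hs₂]
      ring
    refine ⟨hfne, e, ?_, hnorm⟩
    intro h0
    rw [h0, zero_mul] at hnorm
    exact hfne (hinj (by rw [hnorm, map_zero]))
end

section
/- Let F be a field of characteristic different from 2, let a, b ∈ F^×, and let x, y ∈ F(√b). Then x² − ay² lies in F if and only if there exist x₁, y₁, x₂, y₂ ∈ F such that x² − ay² = (x₁² − ay₁²)·(x₂² − ab·y₂²). -/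
/-!
Write `F(√b) = F ⊕ F s` with `s² = b`. If `s ∈ F` everything lies in `F` and the second factor
can be taken to be `1`. Otherwise, for `x = x₀ + x₁ s` and `y = y₀ + y₁ s`,
`x² − a y² = (x₀² + b x₁² − a y₀² − a b y₁²) + 2 (x₀ x₁ − a y₀ y₁) s`, so it lies in `F` exactly
when `x₀ x₁ = a y₀ y₁`, and under this relation the rational part factors explicitly, e.g.
`(1 − a (y₀/x₀)²)(x₀² − a b y₁²)` when `x₀ ≠ 0`.
-/

open Set

theorem Algebra.exists_eq_add_mul_of_mem_adjoin_singleton {R A : Type*} [CommRing R]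
    [CommRing A] [Algebra R A] {b : R} {s z : A} (hs : s ^ 2 = algebraMap R A b)
    (hz : z ∈ Algebra.adjoin R {s}) :
    ∃ c d : R, z = algebraMap R A c + algebraMap R A d * s := by
  induction hz using Algebra.adjoin_induction with
  | mem u hu =>
    rw [mem_singleton_iff.mp hu]
    exact ⟨0, 1, by simp⟩
  | algebraMap r => exact ⟨r, 0, by simp⟩
  | add u v _ _ ihu ihv =>
    obtain ⟨c₁, d₁, rfl⟩ := ihu
    obtain ⟨c₂, d₂, rfl⟩ := ihv
    exact ⟨c₁ + c₂, d₁ + d₂, by simp only [map_add]; ring⟩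
  | mul u v _ _ ihu ihv =>
    obtain ⟨c₁, d₁, rfl⟩ := ihu
    obtain ⟨c₂, d₂, rfl⟩ := ihv
    refine ⟨c₁ * c₂ + d₁ * d₂ * b, c₁ * d₂ + c₂ * d₁, ?_⟩
    simp only [map_add, map_mul]
    linear_combination algebraMap R A d₁ * algebraMap R A d₂ * hs

theorem eq_zero_of_algebraMap_add_algebraMap_mul_mem_range {F L : Type*} [Field F] [Ring L]
    [Algebra F L] {s : L} (hs : s ∉ range (algebraMap F L)) {c d : F}
    (h : algebraMap F L c + algebraMap F L d * s ∈ range (algebraMap F L)) : d = 0 := by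
  obtain ⟨f, hf⟩ := h
  by_contra hd
  refine hs ⟨(f - c) / d, ?_⟩
  calc algebraMap F L ((f - c) / d)
      = algebraMap F L d⁻¹ * (algebraMap F L d * s) := by
        rw [div_eq_inv_mul, map_mul, map_sub, hf, add_sub_cancel_left]
    _ = s := by rw [← mul_assoc, ← map_mul, inv_mul_cancel₀ hd, map_one, one_mul]

theorem exists_sq_sub_mul_sq_mul_eq_of_mul_eq {F : Type*} [Field F] {a : F} (ha : a ≠ 0)
    (b : F) {x₀ x₁ y₀ y₁ : F} (h : x₀ * x₁ = a * (y₀ * y₁)) :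
    ∃ u v w t : F, x₀ ^ 2 + b * x₁ ^ 2 - a * y₀ ^ 2 - a * b * y₁ ^ 2 =
      (u ^ 2 - a * v ^ 2) * (w ^ 2 - a * b * t ^ 2) := by
  by_cases hx₀ : x₀ = 0
  · subst hx₀
    by_cases hy₁ : y₁ = 0
    · subst hy₁
      exact ⟨0, 1 / a, a * y₀, x₁, by field_simp; ring⟩
    · obtain rfl : y₀ = 0 := by simpa [ha, hy₁, eq_comm] using h
      exact ⟨1, x₁ / (a * y₁), 0, y₁, by field_simp; ring⟩
  · refine ⟨1, y₀ / x₀, x₀, y₁, ?_⟩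
    field_simp
    linear_combination b * (x₀ * x₁ + a * (y₀ * y₁)) * h

theorem binary_quadratic_form_values_general
    (F L : Type*) [Field F] [Field L] [Algebra F L]
    (hchar : (2 : F) ≠ 0)
    (a b : F) (ha : a ≠ 0)
    (s : L) (hs : s ^ 2 = algebraMap F L b)
    (htop : Algebra.adjoin F ({s} : Set L) = ⊤) :
    ∀ x y : L,
      ((∃ f : F, algebraMap F L f = x ^ 2 - algebraMap F L a * y ^ 2) ↔
        (∃ x₁ y₁ x₂ y₂ : F,
          x ^ 2 - algebraMap F L a * y ^ 2 =
            algebraMap F L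
              ((x₁ ^ 2 - a * y₁ ^ 2) * (x₂ ^ 2 - a * b * y₂ ^ 2)))) := by
  intro x y
  refine ⟨fun hxy => ?_, fun ⟨x₁, y₁, x₂, y₂, h⟩ => ⟨_, h.symm⟩⟩
  have hdecomp (z : L) := Algebra.exists_eq_add_mul_of_mem_adjoin_singleton hs
    (htop ▸ Algebra.mem_top : z ∈ Algebra.adjoin F {s})
  obtain ⟨x₀, x₁, rfl⟩ := hdecomp x
  obtain ⟨y₀, y₁, rfl⟩ := hdecomp y
  by_cases hsF : s ∈ range (algebraMap F L)
  · obtain ⟨t, rfl⟩ := hsF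
    refine ⟨x₀ + x₁ * t, y₀ + y₁ * t, 1, 0, ?_⟩
    simp only [map_add, map_mul, map_sub, map_pow, map_one, map_zero]
    ring
  have hexpand : (algebraMap F L x₀ + algebraMap F L x₁ * s) ^ 2 -
      algebraMap F L a * (algebraMap F L y₀ + algebraMap F L y₁ * s) ^ 2 =
      algebraMap F L (x₀ ^ 2 + b * x₁ ^ 2 - a * y₀ ^ 2 - a * b * y₁ ^ 2) +
        algebraMap F L (2 * (x₀ * x₁ - a * (y₀ * y₁))) * s := by
    simp only [map_add, map_mul, map_sub, map_pow, map_ofNat]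
    linear_combination (algebraMap F L x₁ ^ 2 - algebraMap F L a * algebraMap F L y₁ ^ 2) * hs
  have hcoeff := eq_zero_of_algebraMap_add_algebraMap_mul_mem_range hsF (hexpand ▸ hxy)
  have hrel : x₀ * x₁ = a * (y₀ * y₁) :=
    sub_eq_zero.mp ((mul_eq_zero.mp hcoeff).resolve_left hchar)
  obtain ⟨u, v, w, t, h⟩ := exists_sq_sub_mul_sq_mul_eq_of_mul_eq ha b hrel
  exact ⟨u, v, w, t, by rw [hexpand, hcoeff, map_zero, zero_mul, add_zero, h]⟩

/-- **Corollary 2.** Let `F` be a field of characteristic different from 2,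
`a, b ∈ F^×`, and `x, y ∈ F(√b)`.  Then `x² − a y²` lies in `F` iff there
exist `x₁, y₁, x₂, y₂ ∈ F` with
`x² − a y² = (x₁² − a y₁²)·(x₂² − a b y₂²)`. -/
theorem binary_quadratic_form_values
    (F L : Type*) [Field F] [Field L] [Algebra F L]
    (hchar : (2 : F) ≠ 0)
    (a b : F) (ha : a ≠ 0) (hb : b ≠ 0)
    (s : L) (hs : s ^ 2 = algebraMap F L b)
    (htop : Algebra.adjoin F ({s} : Set L) = ⊤) :
    ∀ x y : L,
      ((∃ f : F, algebraMap F L f = x ^ 2 - algebraMap F L a * y ^ 2) ↔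
        (∃ x₁ y₁ x₂ y₂ : F,
          x ^ 2 - algebraMap F L a * y ^ 2 =
            algebraMap F L
              ((x₁ ^ 2 - a * y₁ ^ 2) * (x₂ ^ 2 - a * b * y₂ ^ 2)))) :=
  binary_quadratic_form_values_general F L hchar a b ha s hs htop
end
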